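/- arXiv:1912.00851 — 6 statements merged into one kernel-verified Lean document; each statement's English description precedes it below -/
import Mathlib

section
/- Let f : ℕ → [0,∞) be weakly super-multiplicative, and suppose f has a normal order g, where g : (0,∞) → (0,∞) is strictly positive and log-uniformly continuous. Then sup_{n≥2} (log f(n))/(log n) = lim ess_{n→∞} (log f(n))/(log n), as elements of ℝ ∪ {−∞, +∞} (with the convention log 0 = −∞); in particular the essential limit exists. -/
/-- The upper density of a set of natural numbers:
`limsup_{N→∞} #{n ∈ S : n ≤ N} / N`. -/
noncomputable def upperDensity (S : Set ℕ) : ℝ :=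
  Filter.limsup (fun N : ℕ => (({n | n ∈ S ∧ n ≤ N} : Set ℕ).ncard : ℝ) / N) Filter.atTop

/-- `S` has natural density `α` if `#{n ∈ S : n ≤ N} / N → α`. -/
def HasNatDensity (S : Set ℕ) (α : ℝ) : Prop :=
  Filter.Tendsto (fun N : ℕ => (({n | n ∈ S ∧ n ≤ N} : Set ℕ).ncard : ℝ) / N)
    Filter.atTop (nhds α)

/-- `f` is weakly super-multiplicative: for every `n` and `ε > 0` there exist
`x₀ > 0` and `δ > 0` such that for all `x > x₀` the number of integers
`m ∈ [x, (1+ε)x]` with `f(nm) ≥ (1-ε) f(n) f(m)` is at least `δ x`. -/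
def WeaklySuperMult (f : ℕ → ℝ) : Prop :=
  ∀ n : ℕ, 0 < n → ∀ ε : ℝ, 0 < ε → ∃ x₀ : ℝ, 0 < x₀ ∧ ∃ δ : ℝ, 0 < δ ∧
    ∀ x : ℝ, x₀ < x →
      δ * x ≤
        (({m : ℕ | (x ≤ (m : ℝ) ∧ (m : ℝ) ≤ (1 + ε) * x) ∧
            (1 - ε) * f n * f m ≤ f (n * m)} : Set ℕ).ncard : ℝ)

/-- `f` has normal order `g`: for every `ε > 0` the set
`{n : |f(n) - g(n)| ≥ ε g(n)}` has upper density `0`. -/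
def HasNormalOrder (f : ℕ → ℝ) (g : ℝ → ℝ) : Prop :=
  ∀ ε : ℝ, 0 < ε → upperDensity {n : ℕ | ε * g n ≤ |f n - g n|} = 0

/-- The essential limit of a sequence `a : ℕ → EReal` is `L`:
if `L = ⊤`, every set `{n : aₙ < M}` has density `0`; if `L` is a real number `l`,
for every `ε > 0` the set `{n : |aₙ - l| > ε}` has density `0`. -/
def EssLimitTo (a : ℕ → EReal) (L : EReal) : Prop :=
  (L = ⊤ ∧ ∀ M : ℝ, HasNatDensity {n : ℕ | a n < (M : EReal)} 0) ∨
  (∃ l : ℝ, L = (l : EReal) ∧ ∀ ε : ℝ, 0 < ε →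
    HasNatDensity
      {n : ℕ | a n < ((l - ε : ℝ) : EReal) ∨ ((l + ε : ℝ) : EReal) < a n} 0)

/-- `log f(n) / log n` as an extended real number, with the convention
`log 0 = -∞`. -/
noncomputable def logRatio (f : ℕ → ℝ) (n : ℕ) : EReal :=
  if f n = 0 then ⊥ else ((Real.log (f n) / Real.log n : ℝ) : EReal)

/-- `g` is log-uniformly continuous: for every `ε > 0` there is `δ > 0` such that
`|x/y - 1| < δ` implies `|g(x)/g(y) - 1| < ε` for positive `x, y`. -/
def LogUniformlyContinuous (g : ℝ → ℝ) : Prop :=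
  ∀ ε : ℝ, 0 < ε → ∃ δ : ℝ, 0 < δ ∧ ∀ x y : ℝ, 0 < x → 0 < y →
    |x / y - 1| < δ → |g x / g y - 1| < ε

/-!
Write `g` in logarithmic coordinates, `G t = log g (exp t)`. Log-uniform continuity makes `G`
uniformly continuous, hence coarsely Lipschitz: `|G s - G t| ≤ A |s - t| + 1`.

Fix `n ≥ 2` with `f n > 0`. For large `y` some `m ∈ [y, (1 + ε) y]` satisfies
`f (n m) ≥ (1 - ε) f n f m` while neither `m` nor `n m` lies in the exceptional set of the normal
order (it has density zero, and so has its preimage under `m ↦ n m`). Comparing `f` with `g` at `m`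
and `n m`, and `g` at nearby points, gives `g (n y) ≥ θ f(n) g(y)` for any `θ < 1`. Iterated along
`y, n y, n² y, …` this makes `log g z / log z` eventually at least `log f(n) / log n - ε`.
Conversely, every window `[z, 2z]` contains an `m` outside the exceptional set, so
`log g z ≤ log f m + O(1) ≤ L log z + O(1)`, where `L` is the supremum. Hence
`log g z / log z → L`, and since `log f n = log g n + O(1)` off a set of density zero,
`log f n / log n → L` in density.
-/

open Filter Set Real Topology

def IsNegligible (S : Set ℕ) : Prop :=
  ∀ η > 0, ∀ᶠ x : ℝ in atTop, (({m | m ∈ S ∧ (m : ℝ) ≤ x} : Set ℕ).ncard : ℝ) ≤ η * x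

lemma ncard_setOf_mem_and_le_le_add_one (S : Set ℕ) (N : ℕ) :
    (({n | n ∈ S ∧ n ≤ N} : Set ℕ).ncard : ℝ) ≤ N + 1 := by
  have h := Set.ncard_le_ncard (fun n (hn : n ∈ S ∧ n ≤ N) => Set.mem_Iic.2 hn.2)
    (Set.finite_Iic N)
  rw [← Finset.coe_Iic, Set.ncard_coe_finset, Nat.card_Iic] at h
  exact_mod_cast h

lemma isNegligible_of_upperDensity_eq_zero {S : Set ℕ} (h : upperDensity S = 0) :
    IsNegligible S := by
  intro η hη
  have hbdd : IsBoundedUnder (· ≤ ·) atTop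
      (fun N : ℕ => (({n | n ∈ S ∧ n ≤ N} : Set ℕ).ncard : ℝ) / N) := by
    refine isBoundedUnder_of_eventually_le (a := 2) ?_
    filter_upwards [eventually_ge_atTop 1] with N hN
    have hN1 : (1 : ℝ) ≤ N := by exact_mod_cast hN
    rw [div_le_iff₀ (by linarith)]
    linarith [ncard_setOf_mem_and_le_le_add_one S N]
  obtain ⟨N₀, hN₀⟩ := eventually_atTop.1
    (eventually_lt_of_limsup_lt (show upperDensity S < η by rw [h]; exact hη) hbdd)
  filter_upwards [eventually_ge_atTop ((N₀ : ℝ) + 1)] with x hx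
  have hx0 : 0 ≤ x := by linarith [(N₀.cast_nonneg : (0 : ℝ) ≤ N₀)]
  have hN₀x : N₀ ≤ ⌊x⌋₊ := Nat.le_floor (by linarith)
  have hfloor : (0 : ℝ) < ⌊x⌋₊ :=
    Nat.cast_pos.2 (Nat.floor_pos.2 (by linarith [(N₀.cast_nonneg : (0 : ℝ) ≤ N₀)]))
  have hset : {m | m ∈ S ∧ (m : ℝ) ≤ x} = {m | m ∈ S ∧ m ≤ ⌊x⌋₊} := by
    ext m; simp only [Set.mem_ofPred_eq, Nat.le_floor_iff hx0]
  have hcount := (div_lt_iff₀ hfloor).1 (hN₀ _ hN₀x)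
  rw [hset]
  nlinarith [Nat.floor_le hx0]

lemma IsNegligible.mono {S T : Set ℕ} (hS : IsNegligible S) (hTS : T ⊆ S) :
    IsNegligible T := by
  intro η hη
  filter_upwards [hS η hη] with x hx
  refine le_trans ?_ hx
  exact_mod_cast Set.ncard_le_ncard
    (show {m | m ∈ T ∧ (m : ℝ) ≤ x} ⊆ {m | m ∈ S ∧ (m : ℝ) ≤ x} from
      fun m hm => ⟨hTS hm.1, hm.2⟩)
    ((Set.finite_Iic ⌊x⌋₊).subset fun m hm => Nat.le_floor hm.2)

lemma IsNegligible.union {S T : Set ℕ} (hS : IsNegligible S) (hT : IsNegligible T) :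
    IsNegligible (S ∪ T) := by
  intro η hη
  filter_upwards [hS (η / 2) (half_pos hη), hT (η / 2) (half_pos hη)] with x hSx hTx
  have hsplit : {m | m ∈ S ∪ T ∧ (m : ℝ) ≤ x} =
      {m | m ∈ S ∧ (m : ℝ) ≤ x} ∪ {m | m ∈ T ∧ (m : ℝ) ≤ x} := by
    ext m; simp only [Set.mem_ofPred_eq, Set.mem_union]; tauto
  have h := Set.ncard_union_le {m | m ∈ S ∧ (m : ℝ) ≤ x} {m | m ∈ T ∧ (m : ℝ) ≤ x}
  rw [hsplit]
  have h' : (({m | m ∈ S ∧ (m : ℝ) ≤ x} ∪ {m | m ∈ T ∧ (m : ℝ) ≤ x} : Set ℕ).ncard : ℝ) ≤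
      ({m | m ∈ S ∧ (m : ℝ) ≤ x} : Set ℕ).ncard + ({m | m ∈ T ∧ (m : ℝ) ≤ x} : Set ℕ).ncard := by
    exact_mod_cast h
  linarith

lemma Set.Finite.isNegligible {S : Set ℕ} (hS : S.Finite) : IsNegligible S := by
  intro η hη
  filter_upwards [eventually_ge_atTop ((S.ncard : ℝ) / η)] with x hx
  calc (({m | m ∈ S ∧ (m : ℝ) ≤ x} : Set ℕ).ncard : ℝ) ≤ S.ncard := by
        exact_mod_cast Set.ncard_le_ncard (fun m (hm : m ∈ S ∧ (m : ℝ) ≤ x) => hm.1) hS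
    _ ≤ η * x := by rwa [div_le_iff₀' hη] at hx

lemma IsNegligible.preimage_mul {S : Set ℕ} (hS : IsNegligible S) {n : ℕ} (hn : 0 < n) :
    IsNegligible {m | n * m ∈ S} := by
  intro η hη
  have hn' : (0 : ℝ) < n := by exact_mod_cast hn
  have hnx : Tendsto (fun x : ℝ => n * x) atTop atTop := tendsto_id.const_mul_atTop hn'
  filter_upwards [hnx.eventually (hS (η / n) (div_pos hη hn'))] with x hx
  have himage : (n * ·) '' {m | n * m ∈ S ∧ (m : ℝ) ≤ x} ⊆
      {k | k ∈ S ∧ (k : ℝ) ≤ n * x} := by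
    rintro _ ⟨m, ⟨hmS, hmx⟩, rfl⟩
    exact ⟨hmS, by push_cast; exact mul_le_mul_of_nonneg_left hmx hn'.le⟩
  have hle := Set.ncard_le_ncard himage
    ((Set.finite_Iic ⌊(n : ℝ) * x⌋₊).subset fun m hm => Nat.le_floor hm.2)
  rw [Set.ncard_image_of_injective _ (mul_right_injective₀ hn.ne')] at hle
  calc (({m | n * m ∈ S ∧ (m : ℝ) ≤ x} : Set ℕ).ncard : ℝ)
      ≤ ({k | k ∈ S ∧ (k : ℝ) ≤ n * x} : Set ℕ).ncard := by exact_mod_cast hle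
    _ ≤ η / n * (n * x) := hx
    _ = η * x := by field_simp

lemma IsNegligible.hasNatDensity_zero {S : Set ℕ} (hS : IsNegligible S) :
    HasNatDensity S 0 := by
  refine tendsto_order.2 ⟨fun q hq => Eventually.of_forall fun N => ?_, fun q hq => ?_⟩
  · exact hq.trans_le (by positivity)
  filter_upwards [tendsto_natCast_atTop_atTop.eventually (hS (q / 2) (half_pos hq)),
    eventually_ge_atTop 1] with N hN hN1
  have hN0 : (0 : ℝ) < N := by exact_mod_cast hN1
  have hset : {m | m ∈ S ∧ m ≤ N} = {m | m ∈ S ∧ (m : ℝ) ≤ N} := by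
    ext m; simp only [Set.mem_ofPred_eq, Nat.cast_le]
  rw [hset, div_lt_iff₀ hN0]
  linarith [mul_lt_mul_of_pos_right (half_lt_self hq) hN0]

lemma IsNegligible.eventually_exists_not_mem {S : Set ℕ} (hS : IsNegligible S) {c κ : ℝ}
    (hc : 0 < c) (hκ : 0 < κ) :
    ∀ᶠ x : ℝ in atTop, ∀ A : Set ℕ, (∀ m ∈ A, (m : ℝ) ≤ κ * x) → c * x ≤ A.ncard →
      ∃ m ∈ A, m ∉ S := by
  have hκx : Tendsto (fun x : ℝ => κ * x) atTop atTop := tendsto_id.const_mul_atTop hκ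
  filter_upwards [hκx.eventually (hS (c / (2 * κ)) (by positivity)), eventually_gt_atTop 0]
    with x hx hx0 A hA hcard
  by_contra! hAS
  have hsub : A ⊆ {m | m ∈ S ∧ (m : ℝ) ≤ κ * x} := fun m hm => ⟨hAS m hm, hA m hm⟩
  have hle : (A.ncard : ℝ) ≤ ({m | m ∈ S ∧ (m : ℝ) ≤ κ * x} : Set ℕ).ncard := by
    exact_mod_cast Set.ncard_le_ncard hsub
      ((Set.finite_Iic ⌊κ * x⌋₊).subset fun m hm => Nat.le_floor hm.2)
  have heq : c / (2 * κ) * (κ * x) = c * x / 2 := by field_simp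
  nlinarith

lemma HasNormalOrder.isNegligible {f : ℕ → ℝ} {g : ℝ → ℝ} (hno : HasNormalOrder f g) {ε : ℝ}
    (hε : 0 < ε) : IsNegligible {n | ε * g n ≤ |f n - g n|} :=
  isNegligible_of_upperDensity_eq_zero (hno ε hε)

lemma sub_sub_one_le_ncard {a b : ℝ} (ha : 0 ≤ a) :
    b - a - 1 ≤ (({m : ℕ | a ≤ m ∧ (m : ℝ) ≤ b} : Set ℕ).ncard : ℝ) := by
  rcases lt_or_ge b 0 with hb | hb
  · linarith [(Nat.cast_nonneg _ : (0 : ℝ) ≤ ({m : ℕ | a ≤ m ∧ (m : ℝ) ≤ b} : Set ℕ).ncard)]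
  have hset : {m : ℕ | a ≤ m ∧ (m : ℝ) ≤ b} = ↑(Finset.Icc ⌈a⌉₊ ⌊b⌋₊) := by
    ext m
    simp only [Set.mem_ofPred_eq, Finset.coe_Icc, Set.mem_Icc, Nat.ceil_le, Nat.le_floor_iff hb]
  rw [hset, Set.ncard_coe_finset, Nat.card_Icc]
  have hsub : ((⌊b⌋₊ + 1 : ℕ) : ℝ) - ⌈a⌉₊ ≤ ((⌊b⌋₊ + 1 - ⌈a⌉₊ : ℕ) : ℝ) := by
    rcases le_total ⌈a⌉₊ (⌊b⌋₊ + 1) with h | h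
    · rw [Nat.cast_sub h]
    · rw [Nat.sub_eq_zero_of_le h, Nat.cast_zero, sub_nonpos]; exact_mod_cast h
  push_cast at hsub
  linarith [Nat.ceil_lt_add_one ha, Nat.lt_floor_add_one b]

lemma abs_log_le_one_of_abs_sub_one_lt {u : ℝ} (hu : |u - 1| < 1 / 2) : |Real.log u| ≤ 1 := by
  obtain ⟨hu₁, hu₂⟩ := abs_lt.1 hu
  have hu0 : 0 < u := by linarith
  refine abs_le.2 ⟨?_, by linarith [Real.log_le_sub_one_of_pos hu0]⟩
  have : u⁻¹ ≤ 2 := by rw [inv_le_comm₀ hu0 two_pos]; linarith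
  linarith [Real.one_sub_inv_le_log_of_pos hu0]

lemma abs_log_sub_log_le_one {u v : ℝ} (hv : 0 < v) (huv : |u - v| < 1 / 2 * v) :
    |Real.log u - Real.log v| ≤ 1 := by
  have hu : 0 < u := by linarith [(abs_lt.1 huv).1]
  rw [← Real.log_div hu.ne' hv.ne']
  refine abs_log_le_one_of_abs_sub_one_lt ?_
  rwa [div_sub_one hv.ne', abs_div, abs_of_pos hv, div_lt_iff₀ hv]

lemma abs_sub_le_div_add_one_of_forall_abs_sub_le {G : ℝ → ℝ} {r : ℝ} (hr : 0 < r)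
    (hG : ∀ s t, |s - t| ≤ r → |G s - G t| ≤ 1) (s t : ℝ) :
    |G s - G t| ≤ |s - t| / r + 1 := by
  set k : ℕ := ⌊|s - t| / r⌋₊ + 1 with hk
  have hk0 : (0 : ℝ) < k := by positivity
  have hkr : |s - t| / r < k := by rw [hk]; push_cast; exact Nat.lt_floor_add_one _
  have hk_le : (k : ℝ) ≤ |s - t| / r + 1 := by
    rw [hk]; push_cast; linarith [Nat.floor_le (by positivity : 0 ≤ |s - t| / r)]
  set h := (s - t) / k
  have hstep : |h| ≤ r := by
    rw [abs_div, Nat.abs_cast, div_le_iff₀ hk0]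
    rw [div_lt_iff₀ hr] at hkr
    linarith
  have htele : G s - G t = ∑ i ∈ Finset.range k, (G (t + (i + 1 : ℕ) * h) - G (t + i * h)) := by
    rw [Finset.sum_range_sub (fun i : ℕ => G (t + i * h))]
    simp only [h, Nat.cast_zero, zero_mul, add_zero]
    rw [mul_div_cancel₀ _ hk0.ne', add_sub_cancel]
  calc |G s - G t| ≤ ∑ i ∈ Finset.range k, |G (t + (i + 1 : ℕ) * h) - G (t + i * h)| := by
        rw [htele]; exact Finset.abs_sum_le_sum_abs _ _
    _ ≤ ∑ _i ∈ Finset.range k, (1 : ℝ) := by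
        refine Finset.sum_le_sum fun i _ => hG _ _ ?_
        push_cast
        ring_nf
        exact hstep
    _ = k := by simp
    _ ≤ |s - t| / r + 1 := hk_le

lemma LogUniformlyContinuous.exists_abs_log_sub_le {g : ℝ → ℝ} (hgluc : LogUniformlyContinuous g)
    (hgpos : ∀ x, 0 < x → 0 < g x) :
    ∃ A, 0 ≤ A ∧ ∀ x y, 0 < x → 0 < y →
      |Real.log (g y) - Real.log (g x)| ≤ A * |Real.log y - Real.log x| + 1 := by
  obtain ⟨δ, hδ, hgδ⟩ := hgluc (1 / 2) one_half_pos
  obtain ⟨r, hr, hexp⟩ := Metric.continuousAt_iff.1 Real.continuous_exp.continuousAt δ hδ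
  have hosc : ∀ s t, |s - t| ≤ r / 2 →
      |Real.log (g (Real.exp s)) - Real.log (g (Real.exp t))| ≤ 1 := by
    intro s t hst
    have hclose : |Real.exp s / Real.exp t - 1| < δ := by
      rw [← Real.exp_sub, ← Real.exp_zero]
      exact hexp (by rw [Real.dist_eq, sub_zero]; linarith)
    rw [← Real.log_div (hgpos _ (Real.exp_pos s)).ne' (hgpos _ (Real.exp_pos t)).ne']
    exact abs_log_le_one_of_abs_sub_one_lt
      (hgδ _ _ (Real.exp_pos s) (Real.exp_pos t) hclose)
  refine ⟨2 / r, by positivity, fun x y hx hy => ?_⟩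
  have h := abs_sub_le_div_add_one_of_forall_abs_sub_le (half_pos hr) hosc
    (Real.log y) (Real.log x)
  rw [Real.exp_log hx, Real.exp_log hy] at h
  calc _ ≤ |Real.log y - Real.log x| / (r / 2) + 1 := h
    _ = 2 / r * |Real.log y - Real.log x| + 1 := by field_simp

lemma LogUniformlyContinuous.exists_mul_lt {g : ℝ → ℝ} (hgluc : LogUniformlyContinuous g)
    (hgpos : ∀ x, 0 < x → 0 < g x) {ε : ℝ} (hε : 0 < ε) :
    ∃ δ > 0, ∀ x y, 0 < x → 0 < y → |y / x - 1| < δ → (1 - ε) * g x < g y := by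
  obtain ⟨δ, hδ, hgδ⟩ := hgluc ε hε
  refine ⟨δ, hδ, fun x y hx hy hxy => ?_⟩
  have h := (abs_lt.1 (hgδ y x hy hx hxy)).1
  rw [lt_sub_iff_add_lt, lt_div_iff₀ (hgpos x hx)] at h
  linarith

lemma eventually_mul_le_of_add_le_comp_add {H : ℝ → ℝ} {a c T K : ℝ} (ha : 0 < a)
    (hstep : ∀ t ≥ T, H t + c ≤ H (t + a)) (hbdd : ∀ t ∈ Icc T (T + a), K ≤ H t)
    {η : ℝ} (hη : 0 < η) : ∀ᶠ t in atTop, (c / a - η) * t ≤ H t := by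
  have hiter : ∀ k : ℕ, ∀ s ∈ Icc T (T + a), K + k * c ≤ H (s + k * a) := by
    intro k
    induction k with
    | zero => intro s hs; simpa using hbdd s hs
    | succ k ih =>
      intro s hs
      have h := hstep (s + k * a) (by nlinarith [hs.1, (k.cast_nonneg : (0 : ℝ) ≤ k)])
      push_cast
      rw [show s + (k + 1) * a = s + k * a + a by ring]
      linarith [ih s hs]
  filter_upwards [eventually_ge_atTop T, eventually_ge_atTop ((c / a * T + |c| - K) / η)]
    with t hT hlarge
  set k := ⌊(t - T) / a⌋₊
  have hk₁ : (k : ℝ) ≤ (t - T) / a := Nat.floor_le (div_nonneg (by linarith) ha.le)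
  have hk₂ : (t - T) / a < k + 1 := Nat.lt_floor_add_one _
  rw [le_div_iff₀ ha] at hk₁
  rw [div_lt_iff₀ ha] at hk₂
  have hs : t - k * a ∈ Icc T (T + a) := ⟨by linarith, by linarith⟩
  have h := hiter k _ hs
  rw [sub_add_cancel] at h
  have hkc : c / a * (t - T) - |c| ≤ k * c := by
    have hka : c / a * (t - T) = (t - T) / a * c := by ring
    rcases le_total 0 c with hc | hc
    · have : ((t - T) / a - 1) * c ≤ k * c :=
        mul_le_mul_of_nonneg_right (by rw [div_sub_one ha.ne', div_le_iff₀ ha]; linarith) hc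
      rw [abs_of_nonneg hc]; linarith
    · have : (t - T) / a * c ≤ k * c :=
        mul_le_mul_of_nonpos_right ((le_div_iff₀ ha).2 hk₁) hc
      linarith [abs_nonneg c]
  rw [div_le_iff₀ hη] at hlarge
  nlinarith

lemma le_of_eventually_mul_le_mul_add {α : Type*} {l : Filter α} [l.NeBot] {u : α → ℝ}
    (hu : Tendsto u l atTop) {a b c : ℝ} (h : ∀ᶠ x in l, a * u x ≤ b * u x + c) : a ≤ b := by
  by_contra! hba
  obtain ⟨x, hx, hux⟩ := (h.and (hu.eventually_gt_atTop (c / (a - b)))).exists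
  rw [div_lt_iff₀ (sub_pos.2 hba)] at hux
  linarith

section

variable {f : ℕ → ℝ} {g : ℝ → ℝ}

lemma HasNormalOrder.eventually_exists_mem_Icc_abs_sub_lt (hno : HasNormalOrder f g) :
    ∀ᶠ x : ℝ in atTop, ∃ m : ℕ, x ≤ m ∧ (m : ℝ) ≤ 2 * x ∧ |f m - g m| < 1 / 2 * g m := by
  filter_upwards [(hno.isNegligible one_half_pos).eventually_exists_not_mem one_half_pos two_pos,
    eventually_ge_atTop 2] with x hx hx2
  obtain ⟨m, ⟨hxm, hm2x⟩, hm⟩ := hx {m : ℕ | x ≤ m ∧ (m : ℝ) ≤ 2 * x} (fun m hm => hm.2)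
    (by linarith [sub_sub_one_le_ncard (b := 2 * x) (by linarith : (0 : ℝ) ≤ x)])
  exact ⟨m, hxm, hm2x, not_le.1 hm⟩

lemma WeaklySuperMult.eventually_exists_good_multiplier (hwsm : WeaklySuperMult f)
    (hno : HasNormalOrder f g) {n : ℕ} (hn : 0 < n) {ε : ℝ} (hε : 0 < ε) :
    ∀ᶠ y : ℝ in atTop, ∃ m : ℕ, (y ≤ m ∧ (m : ℝ) ≤ (1 + ε) * y) ∧
      (1 - ε) * f n * f m ≤ f (n * m) ∧ |f m - g m| < ε * g m ∧
      |f (n * m) - g ↑(n * m)| < ε * g ↑(n * m) := by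
  obtain ⟨x₀, -, δ, hδ, hcount⟩ := hwsm n hn ε hε
  have hbad := (hno.isNegligible hε).union ((hno.isNegligible hε).preimage_mul hn)
  filter_upwards [hbad.eventually_exists_not_mem hδ (by linarith : (0 : ℝ) < 1 + ε),
    eventually_gt_atTop x₀] with y hy hyx₀
  obtain ⟨m, ⟨hm, hsuper⟩, hmbad⟩ := hy _ (fun m hm => hm.1.2) (hcount y hyx₀)
  simp only [Set.mem_union, Set.mem_ofPred_eq, not_or, not_le] at hmbad
  exact ⟨m, hm, hsuper, hmbad⟩

lemma WeaklySuperMult.eventually_pow_mul_le_apply_mul (hwsm : WeaklySuperMult f)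
    (hno : HasNormalOrder f g) (hgpos : ∀ x, 0 < x → 0 < g x)
    (hgluc : LogUniformlyContinuous g) {n : ℕ} (hn : 0 < n) (hfn : 0 ≤ f n) {ε : ℝ}
    (hε : 0 < ε) (hε₁ : ε < 1) :
    ∀ᶠ y : ℝ in atTop, (1 - ε) ^ 4 * (f n * g y) ≤ (1 + ε) * g (n * y) := by
  obtain ⟨δ, hδ, hgδ⟩ := hgluc.exists_mul_lt hgpos hε
  set ε' := min ε (δ / 2)
  have hε' : 0 < ε' := lt_min hε (half_pos hδ)
  have hε'ε : ε' ≤ ε := min_le_left _ _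
  have hε'δ : ε' < δ := (min_le_right _ _).trans_lt (half_lt_self hδ)
  filter_upwards [hwsm.eventually_exists_good_multiplier hno hn hε', eventually_gt_atTop 0]
    with y ⟨m, ⟨hym, hmy⟩, hsuper, hm, hnm⟩ hy
  have hm0 : (0 : ℝ) < m := hy.trans_le hym
  have hn0 : (0 : ℝ) < n := by exact_mod_cast hn
  have hcast : ((n * m : ℕ) : ℝ) = n * m := by push_cast; ring
  rw [hcast] at hnm
  have hgm : (1 - ε) * g y < g m := hgδ y m hy hm0 (by
    rw [abs_of_nonneg (by rw [sub_nonneg, le_div_iff₀ hy]; linarith),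
      sub_lt_iff_lt_add', div_lt_iff₀ hy]
    nlinarith)
  have hgny : (1 - ε) * g (n * m) < g (n * y) := hgδ _ _ (by positivity) (by positivity) (by
    rw [mul_div_mul_left _ _ hn0.ne', abs_of_nonpos (by rw [sub_nonpos, div_le_one hm0]; exact hym),
      neg_sub, sub_lt_comm, lt_div_iff₀ hm0]
    nlinarith)
  have hfm : (1 - ε) * g m < f m := by
    linarith [(abs_lt.1 hm).1, mul_le_mul_of_nonneg_right hε'ε (hgpos _ hm0).le]
  have hfnm : f (n * m) < (1 + ε) * g (n * m) := by
    linarith [(abs_lt.1 hnm).2, mul_le_mul_of_nonneg_right hε'ε (hgpos (n * m) (by positivity)).le]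
  have hfnm' : (1 - ε) * f n * f m ≤ f (n * m) := by
    have : 0 ≤ f n * f m := mul_nonneg hfn ((mul_pos (by linarith) (hgpos _ hm0)).le.trans hfm.le)
    nlinarith
  have h1ε : 0 < 1 - ε := by linarith
  calc (1 - ε) ^ 4 * (f n * g y) = (1 - ε) ^ 3 * f n * ((1 - ε) * g y) := by ring
    _ ≤ (1 - ε) ^ 3 * f n * g m := by gcongr
    _ = (1 - ε) ^ 2 * f n * ((1 - ε) * g m) := by ring
    _ ≤ (1 - ε) ^ 2 * f n * f m := by gcongr
    _ = (1 - ε) * ((1 - ε) * f n * f m) := by ring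
    _ ≤ (1 - ε) * f (n * m) := by gcongr
    _ ≤ (1 - ε) * ((1 + ε) * g (n * m)) := by gcongr
    _ = (1 + ε) * ((1 - ε) * g (n * m)) := by ring
    _ ≤ (1 + ε) * g (n * y) := by gcongr

lemma WeaklySuperMult.eventually_mul_le_apply_mul (hwsm : WeaklySuperMult f)
    (hno : HasNormalOrder f g) (hgpos : ∀ x, 0 < x → 0 < g x)
    (hgluc : LogUniformlyContinuous g) {n : ℕ} (hn : 0 < n) (hfn : 0 ≤ f n) {θ : ℝ}
    (hθ₀ : 0 < θ) (hθ₁ : θ < 1) :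
    ∀ᶠ y : ℝ in atTop, θ * f n * g y ≤ g (n * y) := by
  set ε := (1 - θ) / 5 with hεθ
  have hθε : θ * (1 + ε) ≤ (1 - ε) ^ 4 := by
    have := one_add_mul_le_pow (show -2 ≤ -ε by linarith) 4
    push_cast at this
    nlinarith
  filter_upwards [hwsm.eventually_pow_mul_le_apply_mul hno hgpos hgluc hn hfn
    (by linarith : 0 < ε) (by linarith), eventually_gt_atTop 0] with y hy hy0
  have hfg : 0 ≤ f n * g y := mul_nonneg hfn (hgpos y hy0).le
  refine le_of_mul_le_mul_left ?_ (by linarith : 0 < 1 + ε)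
  nlinarith

lemma WeaklySuperMult.eventually_mul_log_le_log (hwsm : WeaklySuperMult f)
    (hno : HasNormalOrder f g) (hgpos : ∀ x, 0 < x → 0 < g x)
    (hgluc : LogUniformlyContinuous g) {n : ℕ} (hn : 2 ≤ n) (hfn : 0 < f n) {η : ℝ}
    (hη : 0 < η) :
    ∀ᶠ z : ℝ in atTop, (Real.log (f n) / Real.log n - η) * Real.log z ≤ Real.log (g z) := by
  have hn0 : (0 : ℝ) < n := by positivity
  have ha : 0 < Real.log n := Real.log_pos (by exact_mod_cast hn)
  set a := Real.log n
  set θ := Real.exp (-(η / 2 * a))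
  have hθ₁ : θ < 1 := Real.exp_lt_one_iff.2 (by nlinarith)
  obtain ⟨T, hT⟩ := eventually_atTop.1 (tendsto_exp_atTop.eventually
    (hwsm.eventually_mul_le_apply_mul hno hgpos hgluc (by omega) hfn.le (Real.exp_pos _) hθ₁))
  set H := fun t => Real.log (g (Real.exp t))
  have hgexp : ∀ t, 0 < g (Real.exp t) := fun t => hgpos _ (Real.exp_pos t)
  have hstep : ∀ t ≥ T, H t + (-(η / 2 * a) + Real.log (f n)) ≤ H (t + a) := by
    intro t ht
    have h := Real.log_le_log (by have := hgexp t; positivity) (hT t ht)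
    rw [Real.log_mul (by have := hgexp t; positivity) (hgexp t).ne',
      Real.log_mul (Real.exp_pos _).ne' hfn.ne', Real.log_exp] at h
    simp only [H, Real.exp_add, show Real.exp a = n from Real.exp_log hn0, mul_comm (Real.exp t)]
    linarith
  obtain ⟨A, hA₀, hA⟩ := hgluc.exists_abs_log_sub_le hgpos
  have hbdd : ∀ t ∈ Icc T (T + a), H T - (A * a + 1) ≤ H t := by
    rintro t ⟨hTt, htT⟩
    have h := hA _ _ (Real.exp_pos T) (Real.exp_pos t)
    rw [Real.log_exp, Real.log_exp, abs_of_nonneg (sub_nonneg.2 hTt)] at h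
    have : A * (t - T) ≤ A * a := mul_le_mul_of_nonneg_left (by linarith) hA₀
    linarith [neg_abs_le (H t - H T)]
  filter_upwards [tendsto_log_atTop.eventually
      (eventually_mul_le_of_add_le_comp_add ha hstep hbdd (half_pos hη)),
    eventually_gt_atTop 0] with z hz hz0
  simp only [H, Real.exp_log hz0] at hz
  convert hz using 2
  field_simp
  ring

lemma logRatio_of_ne_zero {n : ℕ} (h : f n ≠ 0) :
    logRatio f n = ((Real.log (f n) / Real.log n : ℝ) : EReal) :=
  if_neg h

lemma exists_iSup_logRatio_eq_coe (hf0 : ∀ n, 0 ≤ f n) {A : ℝ}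
    (hA : ∀ n, 2 ≤ n → 0 < f n → Real.log (f n) / Real.log n ≤ A)
    {n₀ : ℕ} (hn₀ : 2 ≤ n₀) (hfn₀ : 0 < f n₀) :
    ∃ L : ℝ, ⨆ n ∈ Ici 2, logRatio f n = L := by
  have hle : ⨆ n ∈ Ici 2, logRatio f n ≤ A := by
    refine iSup₂_le fun n hn => ?_
    by_cases h : f n = 0
    · simp [logRatio, h]
    · rw [logRatio_of_ne_zero h, EReal.coe_le_coe_iff]
      exact hA n hn ((hf0 n).lt_of_ne' h)
  have hge : logRatio f n₀ ≤ ⨆ n ∈ Ici 2, logRatio f n := le_iSup₂_of_le n₀ hn₀ le_rfl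
  rw [logRatio_of_ne_zero hfn₀.ne'] at hge
  refine ⟨(⨆ n ∈ Ici 2, logRatio f n).toReal, (EReal.coe_toReal ?_ ?_).symm⟩
  · exact ne_top_of_le_ne_top (EReal.coe_ne_top A) hle
  · exact ne_bot_of_le_ne_bot (EReal.coe_ne_bot _) hge

lemma HasNormalOrder.exists_two_le_pos (hno : HasNormalOrder f g)
    (hgpos : ∀ x, 0 < x → 0 < g x) : ∃ n, 2 ≤ n ∧ 0 < f n := by
  obtain ⟨x, ⟨m, hxm, -, hm⟩, hx⟩ :=
    (hno.eventually_exists_mem_Icc_abs_sub_lt.and (eventually_ge_atTop 2)).exists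
  have hm2 : (2 : ℝ) ≤ m := hx.trans hxm
  refine ⟨m, by exact_mod_cast hm2, ?_⟩
  linarith [(abs_lt.1 hm).1, hgpos m (by linarith)]

lemma WeaklySuperMult.exists_log_div_log_le (hwsm : WeaklySuperMult f)
    (hno : HasNormalOrder f g) (hgpos : ∀ x, 0 < x → 0 < g x)
    (hgluc : LogUniformlyContinuous g) :
    ∃ A, ∀ n, 2 ≤ n → 0 < f n → Real.log (f n) / Real.log n ≤ A := by
  obtain ⟨A, hA₀, hA⟩ := hgluc.exists_abs_log_sub_le hgpos
  refine ⟨A, fun n hn hfn => le_of_forall_pos_sub_le fun η hη => ?_⟩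
  refine le_of_eventually_mul_le_mul_add tendsto_log_atTop (c := Real.log (g 1) + 1) ?_
  filter_upwards [hwsm.eventually_mul_log_le_log hno hgpos hgluc hn hfn hη,
    eventually_ge_atTop 1] with z hz hz1
  have h := hA 1 z one_pos (by linarith)
  rw [Real.log_one, sub_zero, abs_of_nonneg (Real.log_nonneg hz1)] at h
  linarith [le_abs_self (Real.log (g z) - Real.log (g 1))]

lemma WeaklySuperMult.eventually_lt_log_div_log (hwsm : WeaklySuperMult f)
    (hno : HasNormalOrder f g) (hgpos : ∀ x, 0 < x → 0 < g x)
    (hgluc : LogUniformlyContinuous g) (hf0 : ∀ n, 0 ≤ f n) {q : ℝ}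
    (hq : (q : EReal) < ⨆ n ∈ Ici 2, logRatio f n) :
    ∀ᶠ z : ℝ in atTop, q < Real.log (g z) / Real.log z := by
  obtain ⟨n, hn, hqn⟩ := lt_biSup_iff.1 hq
  have hfn : f n ≠ 0 := fun h => by simp [logRatio, h] at hqn
  rw [logRatio_of_ne_zero hfn, EReal.coe_lt_coe_iff] at hqn
  have hη : 0 < (Real.log (f n) / Real.log n - q) / 2 := by linarith
  filter_upwards [hwsm.eventually_mul_log_le_log hno hgpos hgluc hn ((hf0 n).lt_of_ne' hfn) hη,
    eventually_gt_atTop 1] with z hz hz1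
  rw [lt_div_iff₀ (Real.log_pos hz1)]
  refine lt_of_lt_of_le ?_ hz
  gcongr
  · exact Real.log_pos hz1
  · linarith

lemma HasNormalOrder.exists_eventually_log_le (hno : HasNormalOrder f g)
    (hgpos : ∀ x, 0 < x → 0 < g x) (hgluc : LogUniformlyContinuous g) {L : ℝ}
    (hL : ∀ m, 2 ≤ m → 0 < f m → Real.log (f m) ≤ L * Real.log m) :
    ∃ K, ∀ᶠ z : ℝ in atTop, Real.log (g z) ≤ L * Real.log z + K := by
  obtain ⟨A, hA₀, hA⟩ := hgluc.exists_abs_log_sub_le hgpos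
  refine ⟨(A + |L|) * Real.log 2 + 2, ?_⟩
  filter_upwards [hno.eventually_exists_mem_Icc_abs_sub_lt, eventually_ge_atTop 2]
    with z ⟨m, hzm, hm2z, hm⟩ hz2
  have hz0 : 0 < z := by linarith
  have hm0 : 0 < (m : ℝ) := hz0.trans_le hzm
  have hgm := hgpos m hm0
  have hfm : 0 < f m := by linarith [(abs_lt.1 hm).1]
  have hlogm : Real.log z ≤ Real.log m := Real.log_le_log hz0 hzm
  have hlogm' : Real.log m ≤ Real.log z + Real.log 2 := by
    rw [← Real.log_mul hz0.ne' two_pos.ne']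
    exact Real.log_le_log hm0 (by linarith)
  have hfg := abs_log_sub_log_le_one hgm hm
  have hgz := hA z m hz0 hm0
  rw [abs_of_nonneg (sub_nonneg.2 hlogm)] at hgz
  have hLm : L * Real.log m ≤ L * Real.log z + |L| * Real.log 2 := by
    rcases le_total 0 L with hL0 | hL0
    · rw [abs_of_nonneg hL0]; nlinarith
    · nlinarith [abs_nonneg L, Real.log_pos one_lt_two]
  have := hL m (by exact_mod_cast (show (2 : ℝ) ≤ m by linarith)) hfm
  nlinarith [abs_le.1 hfg, abs_le.1 hgz]

lemma WeaklySuperMult.tendsto_log_div_log (hwsm : WeaklySuperMult f)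
    (hno : HasNormalOrder f g) (hgpos : ∀ x, 0 < x → 0 < g x)
    (hgluc : LogUniformlyContinuous g) (hf0 : ∀ n, 0 ≤ f n) {L : ℝ}
    (hL : ⨆ n ∈ Ici 2, logRatio f n = L) :
    Tendsto (fun z => Real.log (g z) / Real.log z) atTop (𝓝 L) := by
  refine tendsto_order.2 ⟨fun q hq => hwsm.eventually_lt_log_div_log hno hgpos hgluc hf0 ?_,
    fun q hq => ?_⟩
  · rw [hL]; exact_mod_cast hq
  have hub : ∀ m, 2 ≤ m → 0 < f m → Real.log (f m) ≤ L * Real.log m := by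
    intro m hm hfm
    have h : logRatio f m ≤ L := hL ▸ le_iSup₂_of_le m hm le_rfl
    rw [logRatio_of_ne_zero hfm.ne', EReal.coe_le_coe_iff,
      div_le_iff₀ (Real.log_pos (by exact_mod_cast hm))] at h
    exact h
  obtain ⟨K, hK⟩ := hno.exists_eventually_log_le hgpos hgluc hub
  filter_upwards [hK, tendsto_log_atTop.eventually_gt_atTop (max 0 (K / (q - L)))] with z hz hlz
  have hlz0 : 0 < Real.log z := (le_max_left _ _).trans_lt hlz
  have hKlz : K < (q - L) * Real.log z := by
    rw [← div_lt_iff₀' (sub_pos.2 hq)]; exact (le_max_right _ _).trans_lt hlz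
  rw [div_lt_iff₀ hlz0]
  linarith

lemma HasNormalOrder.essLimitTo_logRatio (hno : HasNormalOrder f g)
    (hgpos : ∀ x, 0 < x → 0 < g x) {L : ℝ}
    (hlim : Tendsto (fun z => Real.log (g z) / Real.log z) atTop (𝓝 L)) :
    EssLimitTo (logRatio f) L := by
  refine Or.inr ⟨L, rfl, fun ε hε => ?_⟩
  have hlogn : Tendsto (fun n : ℕ => Real.log n) atTop atTop :=
    tendsto_log_atTop.comp tendsto_natCast_atTop_atTop
  obtain ⟨N, hN⟩ := eventually_atTop.1 <|
    ((hlim.comp tendsto_natCast_atTop_atTop).eventually (Metric.ball_mem_nhds L (half_pos hε))).and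
      (hlogn.eventually_gt_atTop (2 / ε))
  refine (((hno.isNegligible one_half_pos).union (Set.finite_Iic N).isNegligible).mono ?_)
    |>.hasNatDensity_zero
  intro n hn
  by_contra hgood
  simp only [Set.mem_union, Set.mem_ofPred_eq, Set.mem_Iic, not_or, not_le] at hgood
  obtain ⟨hfg, hNn⟩ := hgood
  obtain ⟨hclose, hlarge⟩ := hN n hNn.le
  have hlog0 : 0 < Real.log n := (div_pos two_pos hε).trans hlarge
  have hn0 : (0 : ℝ) < n := by exact_mod_cast N.zero_le.trans_lt hNn
  have hfn : 0 < f n := by linarith [(abs_lt.1 hfg).1, hgpos n hn0]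
  have hdiff : |Real.log (f n) / Real.log n - Real.log (g n) / Real.log n| < ε / 2 := by
    rw [← sub_div, abs_div, abs_of_pos hlog0, div_lt_iff₀ hlog0]
    rw [div_lt_iff₀ hε] at hlarge
    linarith [abs_log_sub_log_le_one (hgpos n hn0) hfg]
  rw [Function.comp_apply, Real.dist_eq] at hclose
  simp only [Set.mem_ofPred_eq, logRatio_of_ne_zero hfn.ne', EReal.coe_lt_coe_iff] at hn
  rcases hn with h | h <;> linarith [abs_lt.1 hdiff, abs_lt.1 hclose]

end

/-- Theorem (log-uniformly continuous case): if `f : ℕ → [0,∞)` is weakly super-multiplicative and has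
a strictly positive, log-uniformly continuous normal order `g`, then
`sup_{n ≥ 2} log f(n) / log n = lim ess log f(n) / log n`. -/
theorem weakly_supermult_normal_order_logUniformlyContinuous
    (f : ℕ → ℝ) (g : ℝ → ℝ)
    (hf0 : ∀ n, 0 ≤ f n)
    (hwsm : WeaklySuperMult f)
    (hgpos : ∀ x : ℝ, 0 < x → 0 < g x)
    (hgluc : LogUniformlyContinuous g)
    (hno : HasNormalOrder f g) :
    EssLimitTo (logRatio f) (⨆ n ∈ Set.Ici (2 : ℕ), logRatio f n) := by
  obtain ⟨A, hA⟩ := hwsm.exists_log_div_log_le hno hgpos hgluc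
  obtain ⟨n₀, hn₀, hfn₀⟩ := hno.exists_two_le_pos hgpos
  obtain ⟨L, hL⟩ := exists_iSup_logRatio_eq_coe hf0 hA hn₀ hfn₀
  rw [hL]
  exact hno.essLimitTo_logRatio hgpos (hwsm.tendsto_log_div_log hno hgpos hgluc hf0 hL)
end

section
/- Let f : ℕ → (0,∞) be a function such that both f and n ↦ 1/f(n) are weakly super-multiplicative, and suppose f has a normal order g, where g : (0,∞) → (0,∞) is strictly positive and monotone (non-decreasing or non-increasing). Then there exists a real constant c such that f(n) = n^c holds for all n ∈ ℕ. -/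
open Filter Topology Set Real

/-!
Write `h = log ∘ f` and `G = log ∘ g`. The exceptional set of the normal order has density zero,
so among the many `m ∈ [x, (1 + ε) x]` at which weak super-multiplicativity of `f` holds there is
one with `m` and `n m` both non-exceptional; since `G` is monotone this gives
`h n + G x ≤ G (n (1 + ε) x) + O(ε)`, and `1 / f` gives `G (n x) ≤ h n + G ((1 + ε) x) + O(ε)`.
Hence `h n` stays within a bounded distance of `G (n x) - G x` for large `x`, so `h` is additive
and monotone up to bounded errors, and Fekete's lemma applied to `k ↦ h (n ^ k)` yields `c` with
`h n - c log n` bounded. The bound is removed by amplification: iterating the two inequalities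
`k` times compares `k h n` with `h N` for `N ≈ n ^ k (1 + ε) ^ (± (k + 1))`, which forces
`|h n - c log n| ≤ O(ε)`. A non-increasing `g` is reduced to the non-decreasing case through
`(1 / f, 1 / g)`, i.e. `(-h, -G)`.
-/

lemma nonpos_of_eventually_nat_mul_le {x C : ℝ} (h : ∀ᶠ k : ℕ in atTop, (k : ℝ) * x ≤ C) :
    x ≤ 0 := by
  by_contra! hx
  obtain ⟨k, hk, hCk⟩ := (h.and (eventually_gt_atTop ⌈C / x⌉₊)).exists
  have := (div_lt_iff₀ hx).1 (Nat.lt_of_ceil_lt hCk)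
  linarith

lemma eq_mul_log_of_map_mul_of_monotone {L : ℕ → ℝ}
    (hmul : ∀ m n, 0 < m → 0 < n → L (m * n) = L m + L n)
    (hmono : ∀ m n, 0 < m → m ≤ n → L m ≤ L n) {n : ℕ} (hn : 0 < n) :
    L n = L 2 / log 2 * log n := by
  have hL1 : L 1 = 0 := by simpa using hmul 1 1 one_pos one_pos
  have hpow (a k : ℕ) (ha : 0 < a) : L (a ^ k) = k * L a := by
    induction k with
    | zero => simp [hL1]
    | succ k ih => rw [pow_succ, hmul _ _ (pow_pos ha k) ha, ih]; push_cast; ring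
  have hL2 : 0 ≤ L 2 := hL1 ▸ hmono 1 2 one_pos one_le_two
  have hlog2 : 0 < log 2 := log_pos one_lt_two
  -- `2 ^ j ≤ n ^ k < 2 ^ (j + 1)` for `j = ⌊k log n / log 2⌋`
  have hbound (k : ℕ) : (k : ℝ) * |L n - L 2 / log 2 * log n| ≤ L 2 := by
    set r := k * log n / log 2
    set j := ⌊r⌋₊
    have hr : 0 ≤ r := div_nonneg (mul_nonneg k.cast_nonneg (log_natCast_nonneg n)) hlog2.le
    have hj : (j : ℝ) ≤ r := Nat.floor_le hr
    have hj' : r ≤ j + 1 := (Nat.lt_floor_add_one r).le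
    have hpow_le {a b : ℕ} (ha : 0 < a) (hb : 0 < b) (s t : ℕ)
        (hst : (s : ℝ) * log a ≤ t * log b) : L (a ^ s) ≤ L (b ^ t) := by
      refine hmono _ _ (pow_pos ha s) (Nat.cast_le (α := ℝ).1 ?_)
      push_cast
      rw [← log_le_log_iff (by positivity) (by positivity), log_pow, log_pow]
      exact hst
    have hlo := hpow_le two_pos hn j k (by rw [le_div_iff₀ hlog2] at hj; push_cast; linarith)
    have hhi := hpow_le hn two_pos k (j + 1)
      (by rw [div_le_iff₀ hlog2] at hj'; push_cast; linarith)
    rw [hpow _ _ two_pos, hpow _ _ hn] at hlo hhi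
    have e : (k : ℝ) * (L n - L 2 / log 2 * log n) = k * L n - L 2 * r := by
      simp only [r]; field_simp
    rw [← abs_of_nonneg (Nat.cast_nonneg (α := ℝ) k), ← abs_mul, e, abs_le]
    push_cast at hhi
    constructor <;> nlinarith [mul_le_mul_of_nonneg_left hj hL2, mul_le_mul_of_nonneg_left hj' hL2]
  have := nonpos_of_eventually_nat_mul_le (Eventually.of_forall hbound)
  linarith [abs_nonpos_iff.1 this]

section QuasiAdditive

variable {h : ℕ → ℝ} {d : ℝ}

lemma exists_tendsto_pow_div_of_quasiAdditive
    (hadd : ∀ m n, 0 < m → 0 < n → |h (m * n) - (h m + h n)| ≤ d) {n : ℕ} (hn : 0 < n) :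
    ∃ L, Tendsto (fun k : ℕ => h (n ^ k) / k) atTop (𝓝 L) ∧ |h n - L| ≤ d := by
  have hd : 0 ≤ d := (abs_nonneg _).trans (hadd 1 1 one_pos one_pos)
  have hlow : ∀ k : ℕ, 1 ≤ k → (k : ℝ) * (h n - d) + d ≤ h (n ^ k) := by
    refine Nat.le_induction (by simp) fun k _ ih => ?_
    have := abs_le.1 (hadd _ _ (pow_pos hn k) hn)
    rw [pow_succ]
    push_cast
    linarith
  set u : ℕ → ℝ := fun k => h (n ^ k) + d
  have hsub : Subadditive u := fun j k => by
    have := abs_le.1 (hadd _ _ (pow_pos hn j) (pow_pos hn k))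
    simp only [u, pow_add]
    linarith
  have hdiv : ∀ k : ℕ, 1 ≤ k → h n - d ≤ h (n ^ k) / k := fun k hk => by
    rw [le_div_iff₀ (by exact_mod_cast hk)]
    nlinarith [hlow k hk]
  have hbdd : BddBelow (range fun k => u k / k) := by
    refine ⟨min 0 (h n - d), ?_⟩
    rintro _ ⟨k, rfl⟩
    rcases Nat.eq_zero_or_pos k with rfl | hk
    · simp
    · refine (min_le_right _ _).trans ((hdiv k hk).trans ?_)
      simp only [u]
      gcongr
      linarith
  have hlim : Tendsto (fun k : ℕ => h (n ^ k) / k) atTop (𝓝 hsub.lim) := by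
    simpa [u, add_div] using
      (hsub.tendsto_lim hbdd).sub (tendsto_const_div_atTop_nhds_zero_nat d)
  refine ⟨hsub.lim, hlim, abs_le.2 ⟨?_, ?_⟩⟩
  · have := hsub.lim_le_div hbdd one_ne_zero
    simp only [u, pow_one, Nat.cast_one, div_one] at this
    linarith
  · have := ge_of_tendsto hlim ((eventually_ge_atTop 1).mono hdiv)
    linarith

lemma exists_abs_sub_mul_log_le_of_quasiAdditive
    (hadd : ∀ m n, 0 < m → 0 < n → |h (m * n) - (h m + h n)| ≤ d)
    (hmono : ∀ m n, 0 < m → m ≤ n → h m ≤ h n + d) :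
    ∃ c, ∀ n, 0 < n → |h n - c * log n| ≤ d := by
  set L : ℕ → ℝ := fun n => limUnder atTop fun k : ℕ => h (n ^ k) / k
  have hL : ∀ n, 0 < n → Tendsto (fun k : ℕ => h (n ^ k) / k) atTop (𝓝 (L n)) ∧
      |h n - L n| ≤ d := fun n hn => by
    obtain ⟨l, hl, hbd⟩ := exists_tendsto_pow_div_of_quasiAdditive hadd hn
    simpa only [L, hl.limUnder_eq] using ⟨hl, hbd⟩
  have hLmul : ∀ m n, 0 < m → 0 < n → L (m * n) = L m + L n := fun m n hm hn => by
    have herr : Tendsto (fun k : ℕ => h ((m * n) ^ k) / k - (h (m ^ k) / k + h (n ^ k) / k))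
        atTop (𝓝 0) := by
      refine squeeze_zero_norm (fun k => ?_) (tendsto_const_div_atTop_nhds_zero_nat d)
      rw [← add_div, ← sub_div, mul_pow, norm_div, Real.norm_eq_abs, Real.norm_natCast]
      gcongr
      exact hadd _ _ (pow_pos hm k) (pow_pos hn k)
    refine tendsto_nhds_unique (hL _ (Nat.mul_pos hm hn)).1 ?_
    simpa using ((hL m hm).1.add (hL n hn).1).add herr
  have hLmono : ∀ m n, 0 < m → m ≤ n → L m ≤ L n := fun m n hm hmn => by
    refine le_of_tendsto_of_tendsto' (hL m hm).1
      (by simpa using (hL n (hm.trans_le hmn)).1.add (tendsto_const_div_atTop_nhds_zero_nat d))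
      fun k => ?_
    rw [← add_div]
    gcongr
    exact hmono _ _ (pow_pos hm k) (Nat.pow_le_pow_left hmn k)
  exact ⟨L 2 / log 2, fun n hn =>
    eq_mul_log_of_map_mul_of_monotone hLmul hLmono hn ▸ (hL n hn).2⟩

end QuasiAdditive

lemma eventually_iterate {G : ℝ → ℝ} {p q b : ℝ} (hp : 0 < p) (hq : 0 < q)
    (h : ∀ᶠ x in atTop, G (p * x) ≤ G (q * x) + b) (k : ℕ) :
    ∀ᶠ x in atTop, G (p ^ k * x) ≤ G (q ^ k * x) + k * b := by
  induction k with
  | zero => simp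
  | succ k ih =>
    filter_upwards [(tendsto_id.const_mul_atTop hp).eventually ih,
      (tendsto_id.const_mul_atTop (pow_pos hq k)).eventually h] with x h₁ h₂
    simp only [id] at h₁ h₂
    rw [show q ^ k * (p * x) = p * (q ^ k * x) by ring] at h₁
    rw [show q * (q ^ k * x) = q ^ (k + 1) * x by ring] at h₂
    rw [show p ^ (k + 1) * x = p ^ k * (p * x) by ring]
    push_cast
    linarith

lemma abs_log_natCeil_sub_log_le {y : ℝ} (hy : 1 ≤ y) : |log ⌈y⌉₊ - log y| ≤ log 2 := by
  have hy0 : 0 < y := by linarith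
  have hlo : log y ≤ log ⌈y⌉₊ := log_le_log hy0 (Nat.le_ceil y)
  have hhi : log ⌈y⌉₊ ≤ log (2 * y) :=
    log_le_log (hy0.trans_le (Nat.le_ceil y)) (Nat.ceil_le_two_mul (by linarith))
  rw [log_mul two_ne_zero hy0.ne'] at hhi
  rw [abs_le]
  constructor <;> linarith [log_pos one_lt_two]

lemma abs_log_natFloor_sub_log_le {y : ℝ} (hy : 1 ≤ y) : |log ⌊y⌋₊ - log y| ≤ log 2 := by
  have hy0 : 0 < y := by linarith
  have hlo : log (y / 2) ≤ log ⌊y⌋₊ := log_le_log (by positivity) (Nat.div_two_lt_floor hy).le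
  have hhi : log ⌊y⌋₊ ≤ log y :=
    log_le_log ((half_pos hy0).trans (Nat.div_two_lt_floor hy)) (Nat.floor_le hy0.le)
  rw [log_div hy0.ne' two_ne_zero] at hlo
  rw [abs_le]
  constructor <;> linarith [log_pos one_lt_two]

noncomputable def densityRatio (S : Set ℕ) (N : ℕ) : ℝ :=
  (({n | n ∈ S ∧ n ≤ N} : Set ℕ).ncard : ℝ) / N

lemma ncard_mem_le_le_add_one (S : Set ℕ) (N : ℕ) : ({n | n ∈ S ∧ n ≤ N} : Set ℕ).ncard ≤ N + 1 :=
  calc _ ≤ (Iic N).ncard := ncard_le_ncard (fun _ hn => hn.2) (finite_Iic N)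
    _ = N + 1 := by rw [← Finset.coe_Iic, ncard_coe_finset, Nat.card_Iic]

lemma densityRatio_nonneg (S : Set ℕ) (N : ℕ) : 0 ≤ densityRatio S N := by
  unfold densityRatio; positivity

lemma densityRatio_le_two (S : Set ℕ) (N : ℕ) : densityRatio S N ≤ 2 := by
  rcases Nat.eq_zero_or_pos N with rfl | hN
  · simp [densityRatio]
  · have hN' : (1 : ℝ) ≤ N := by exact_mod_cast hN
    have : ((({n | n ∈ S ∧ n ≤ N} : Set ℕ).ncard : ℕ) : ℝ) ≤ N + 1 := by
      exact_mod_cast ncard_mem_le_le_add_one S N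
    rw [densityRatio, div_le_iff₀ (by positivity)]
    linarith

lemma tendsto_densityRatio_of_upperDensity_eq_zero {S : Set ℕ} (hS : upperDensity S = 0) :
    Tendsto (densityRatio S) atTop (𝓝 0) := by
  have hbdd : IsBoundedUnder (· ≤ ·) atTop (densityRatio S) :=
    isBoundedUnder_of ⟨2, densityRatio_le_two S⟩
  rw [tendsto_order]
  refine ⟨fun a ha => Eventually.of_forall fun N => ha.trans_le (densityRatio_nonneg S N),
    fun a ha => eventually_lt_of_limsup_lt (by rwa [← hS] at ha) hbdd⟩

lemma eventually_ncard_le_of_upperDensity_eq_zero {S : Set ℕ} (hS : upperDensity S = 0)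
    {c : ℝ} (hc : 0 < c) :
    ∀ᶠ N : ℕ in atTop, (({n | n ∈ S ∧ n ≤ N} : Set ℕ).ncard : ℝ) ≤ c * N := by
  filter_upwards [(tendsto_densityRatio_of_upperDensity_eq_zero hS).eventually (gt_mem_nhds hc),
    eventually_gt_atTop 0] with N hN hN0
  rw [densityRatio, div_lt_iff₀ (by exact_mod_cast hN0)] at hN
  exact hN.le

lemma upperDensity_eq_zero_of_subset_insert {S T : Set ℕ} (hST : S ⊆ insert 0 T)
    (hT : upperDensity T = 0) : upperDensity S = 0 := by
  have hcount (N : ℕ) : densityRatio S N ≤ densityRatio T N + 1 / N := by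
    rw [densityRatio, densityRatio, ← add_div]
    gcongr
    calc ((({n | n ∈ S ∧ n ≤ N} : Set ℕ).ncard : ℕ) : ℝ)
        ≤ ((insert 0 {n | n ∈ T ∧ n ≤ N} : Set ℕ).ncard : ℕ) := by
          refine Nat.cast_le.mpr (ncard_le_ncard (fun n ⟨hnS, hnN⟩ => ?_)
            (((finite_Iic N).subset fun _ hn => hn.2).insert 0))
          rcases hST hnS with rfl | hnT
          · exact mem_insert 0 _
          · exact mem_insert_of_mem 0 ⟨hnT, hnN⟩
      _ ≤ _ := by exact_mod_cast ncard_insert_le 0 _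
  have hlim : Tendsto (densityRatio S) atTop (𝓝 0) := by
    refine tendsto_of_tendsto_of_tendsto_of_le_of_le tendsto_const_nhds ?_
      (densityRatio_nonneg S) hcount
    simpa using (tendsto_densityRatio_of_upperDensity_eq_zero hT).add
      tendsto_one_div_atTop_nhds_zero_nat
  exact hlim.limsup_eq

lemma eventually_ncard_mul_mem_le {E : Set ℕ} (hE : upperDensity E = 0) {a : ℕ} (ha : 0 < a)
    {κ η : ℝ} (hκ : 0 < κ) (hη : 0 < η) :
    ∀ᶠ x : ℝ in atTop, (({m : ℕ | (m : ℝ) ≤ κ * x ∧ a * m ∈ E} : Set ℕ).ncard : ℝ) ≤ η * x := by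
  have ha' : (0 : ℝ) < a := by exact_mod_cast ha
  have hN : Tendsto (fun x : ℝ => a * ⌊κ * x⌋₊) atTop atTop :=
    (tendsto_nat_floor_atTop.comp (tendsto_id.const_mul_atTop hκ)).const_mul_atTop' ha
  filter_upwards [hN.eventually (eventually_ncard_le_of_upperDensity_eq_zero hE
    (div_pos hη (mul_pos ha' hκ))), eventually_gt_atTop 0] with x hx hx0
  have hfloor : (⌊κ * x⌋₊ : ℝ) ≤ κ * x := Nat.floor_le (by positivity)
  calc (({m : ℕ | (m : ℝ) ≤ κ * x ∧ a * m ∈ E} : Set ℕ).ncard : ℝ)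
      ≤ (({k | k ∈ E ∧ k ≤ a * ⌊κ * x⌋₊} : Set ℕ).ncard : ℝ) := by
        refine Nat.cast_le.mpr (ncard_le_ncard_of_injOn (a * ·) (fun m ⟨hm, hmE⟩ => ⟨hmE, ?_⟩)
          (fun m _ m' _ h => Nat.eq_of_mul_eq_mul_left ha h)
          ((finite_Iic _).subset fun _ hk => hk.2))
        exact Nat.mul_le_mul_left a (Nat.le_floor hm)
    _ ≤ η / (a * κ) * (a * ⌊κ * x⌋₊ : ℕ) := hx
    _ ≤ η / (a * κ) * (a * (κ * x)) := by push_cast; gcongr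
    _ = η * x := by field_simp

lemma WeaklySuperMult.eventually_exists_avoiding {F : ℕ → ℝ} (hF : WeaklySuperMult F) {E : Set ℕ}
    (hE : upperDensity E = 0) {n : ℕ} (hn : 0 < n) {ε : ℝ} (hε : 0 < ε) :
    ∀ᶠ x : ℝ in atTop, ∃ m : ℕ, x ≤ m ∧ (m : ℝ) ≤ (1 + ε) * x ∧
      (1 - ε) * F n * F m ≤ F (n * m) ∧ m ∉ E ∧ n * m ∉ E := by
  obtain ⟨x₀, -, δ, hδ, hcount⟩ := hF n hn ε hε
  filter_upwards [eventually_ncard_mul_mem_le hE one_pos (by positivity : (0:ℝ) < 1 + ε)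
      (by positivity : 0 < δ / 4),
    eventually_ncard_mul_mem_le hE hn (by positivity : (0:ℝ) < 1 + ε) (by positivity : 0 < δ / 4),
    eventually_gt_atTop x₀, eventually_gt_atTop 0] with x hE₁ hEn hx₀ hx
  by_contra! hbad
  set B : ℕ → Set ℕ := fun a => {m : ℕ | (m : ℝ) ≤ (1 + ε) * x ∧ a * m ∈ E}
  have hsub : {m : ℕ | ((x ≤ (m : ℝ) ∧ (m : ℝ) ≤ (1 + ε) * x) ∧
      (1 - ε) * F n * F m ≤ F (n * m))} ⊆ B 1 ∪ B n := by
    rintro m ⟨⟨hxm, hmx⟩, hgood⟩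
    by_cases hm : m ∈ E
    · exact Or.inl ⟨hmx, by rwa [one_mul]⟩
    · exact Or.inr ⟨hmx, hbad m hxm hmx hgood hm⟩
  have hfin : (B 1 ∪ B n).Finite :=
    (finite_Iic ⌊(1 + ε) * x⌋₊).subset fun m hm => Nat.le_floor (hm.elim (·.1) (·.1))
  have := (hcount x hx₀).trans (Nat.cast_le.mpr ((ncard_le_ncard hsub hfin).trans
    (ncard_union_le _ _)))
  push_cast at this
  nlinarith

lemma upperDensity_empty : upperDensity ∅ = 0 := by
  simp [upperDensity]

/-- The loss in one comparison step: `ε` twice from the normal order, `-log (1 - ε)` from weak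
super-multiplicativity. -/
noncomputable def starError (ε : ℝ) : ℝ := 2 * ε - log (1 - ε)

lemma nonpos_of_forall_le_starError_add {x a : ℝ}
    (h : ∀ ε, 0 < ε → ε < 1 → x ≤ starError ε + a * log (1 + ε)) : x ≤ 0 := by
  have hcont : ContinuousAt (fun ε => starError ε + a * log (1 + ε)) 0 := by
    unfold starError; fun_prop (disch := norm_num)
  have hlim : Tendsto (fun ε => starError ε + a * log (1 + ε)) (𝓝[>] 0) (𝓝 0) := by
    simpa [starError] using hcont.tendsto.mono_left nhdsWithin_le_nhds
  refine ge_of_tendsto hlim ?_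
  filter_upwards [Ioo_mem_nhdsGT (zero_lt_one' ℝ)] with ε hε using h ε hε.1 hε.2

lemma log_one_sub_add_le_of_mul_exp_le {ε a b c : ℝ} (hε : ε < 1)
    (h : (1 - ε) * exp a * exp b ≤ exp c) : log (1 - ε) + a + b ≤ c := by
  rwa [← exp_le_exp, exp_add, exp_add, exp_log (by linarith)]

lemma WeaklySuperMult.apply_one_nonpos {h : ℕ → ℝ} (hF : WeaklySuperMult fun n => exp (h n)) :
    h 1 ≤ 0 := by
  refine nonpos_of_forall_le_starError_add (a := 0) fun ε hε hε1 => ?_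
  obtain ⟨-, m, -, -, hgood, -⟩ :=
    (hF.eventually_exists_avoiding upperDensity_empty one_pos hε).exists
  have := log_one_sub_add_le_of_mul_exp_le hε1 hgood
  rw [one_mul] at this
  unfold starError
  linarith

/-- `h n` approximates the increment `G (n x) - G x` of `G` for large `x`, up to dilating `x` by
`1 + ε` and an additive error `starError ε`. -/
structure IsLogIncrement (h : ℕ → ℝ) (G : ℝ → ℝ) : Prop where
  mono : MonotoneOn G (Ioi 0)
  map_one : h 1 = 0
  le_increment : ∀ n : ℕ, 0 < n → ∀ ε : ℝ, 0 < ε → ε < 1 →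
    ∀ᶠ x in atTop, h n + G x ≤ G (n * (1 + ε) * x) + starError ε
  increment_le : ∀ n : ℕ, 0 < n → ∀ ε : ℝ, 0 < ε → ε < 1 →
    ∀ᶠ x in atTop, G (n * x) ≤ h n + G ((1 + ε) * x) + starError ε

lemma isLogIncrement_of {h : ℕ → ℝ} {G : ℝ → ℝ} (hG : MonotoneOn G (Ioi 0))
    (hno : ∀ η, 0 < η → upperDensity {k : ℕ | η ≤ |h k - G k|} = 0)
    (hsup : WeaklySuperMult fun n => exp (h n)) (hsub : WeaklySuperMult fun n => exp (-h n)) :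
    IsLogIncrement h G where
  mono := hG
  map_one := le_antisymm hsup.apply_one_nonpos (neg_nonpos.mp hsub.apply_one_nonpos)
  le_increment n hn ε hε hε1 := by
    filter_upwards [hsup.eventually_exists_avoiding (hno ε hε) hn hε, eventually_gt_atTop 0]
      with x ⟨m, hxm, hmx, hgood, hm, hnm⟩ hx
    have hmul := log_one_sub_add_le_of_mul_exp_le hε1 hgood
    have hn' : (0 : ℝ) < n := by exact_mod_cast hn
    have hm' : (0 : ℝ) < m := hx.trans_le hxm
    have hGm : G x ≤ G m := hG hx hm' hxm
    have hGnm : G (n * m) ≤ G (n * (1 + ε) * x) :=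
      hG (mem_Ioi.2 (by positivity)) (mem_Ioi.2 (by positivity)) (by rw [mul_assoc]; gcongr)
    simp only [not_le, abs_lt, Nat.cast_mul] at hm hnm
    unfold starError
    linarith
  increment_le n hn ε hε hε1 := by
    filter_upwards [hsub.eventually_exists_avoiding (hno ε hε) hn hε, eventually_gt_atTop 0]
      with x ⟨m, hxm, hmx, hgood, hm, hnm⟩ hx
    have hmul := log_one_sub_add_le_of_mul_exp_le hε1 hgood
    have hn' : (0 : ℝ) < n := by exact_mod_cast hn
    have hm' : (0 : ℝ) < m := hx.trans_le hxm
    have hGnm : G (n * x) ≤ G (n * m) :=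
      hG (mem_Ioi.2 (by positivity)) (mem_Ioi.2 (by positivity)) (by gcongr)
    have hGm : G m ≤ G ((1 + ε) * x) := hG hm' (mem_Ioi.2 (by positivity)) hmx
    simp only [not_le, abs_lt, Nat.cast_mul] at hm hnm
    unfold starError
    linarith

lemma HasNormalOrder.log_abs_sub {f : ℕ → ℝ} {g : ℝ → ℝ} (hno : HasNormalOrder f g)
    (hfpos : ∀ n, 0 < f n) (hgpos : ∀ x : ℝ, 0 < x → 0 < g x) (η : ℝ) (hη : 0 < η) :
    upperDensity {k : ℕ | η ≤ |log (f k) - log (g k)|} = 0 := by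
  have hε : 0 < 1 - exp (-η) := sub_pos.2 (exp_lt_one_iff.2 (by linarith))
  refine upperDensity_eq_zero_of_subset_insert (fun k hk => ?_) (hno _ hε)
  rcases Nat.eq_zero_or_pos k with rfl | hk0
  · exact mem_insert 0 _
  have hk : η ≤ |log (f k) - log (g k)| := hk
  refine mem_insert_of_mem 0
    (show (1 - exp (-η)) * g k ≤ |f k - g k| from not_lt.1 fun hlt => hk.not_gt ?_)
  have hg := hgpos k (by exact_mod_cast hk0)
  have hf := hfpos k
  have hexp : 2 - exp (-η) ≤ exp η := by
    linarith [add_one_le_exp η, add_one_le_exp (-η)]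
  rw [abs_lt] at hlt ⊢
  have hlo : log (exp (-η) * g k) < log (f k) := log_lt_log (by positivity) (by linarith)
  have hhi : log (f k) < log (exp η * g k) := log_lt_log hf (by nlinarith)
  rw [log_mul (exp_pos _).ne' hg.ne', log_exp] at hlo hhi
  constructor <;> linarith

namespace IsLogIncrement

variable {h : ℕ → ℝ} {G : ℝ → ℝ}

lemma eventually_dilation_le (H : IsLogIncrement h G) :
    ∀ᶠ x in atTop, G ((1 + 1 / 4) * x) ≤ G x + (h 2 + starError (1 / 4)) := by
  have hε : (0 : ℝ) < 1 + 1 / 4 := by norm_num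
  filter_upwards [(tendsto_id.atTop_div_const hε).eventually
      (H.increment_le 2 two_pos (1 / 4) (by norm_num) (by norm_num)),
    eventually_gt_atTop 0] with x hx hx0
  simp only [id, Nat.cast_ofNat, mul_div_cancel₀ x hε.ne'] at hx
  -- `(1 + 1 / 4) ^ 2 ≤ 2`
  have : G ((1 + 1 / 4) * x) ≤ G (2 * (x / (1 + 1 / 4))) :=
    H.mono (mem_Ioi.2 (by positivity)) (mem_Ioi.2 (by positivity))
      (by rw [mul_div_assoc', le_div_iff₀ hε]; nlinarith)
  linarith

lemma exists_abs_sub_increment_le (H : IsLogIncrement h G) :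
    ∃ D, ∀ n : ℕ, 0 < n → ∀ᶠ x in atTop, |h n - (G (n * x) - G x)| ≤ D := by
  refine ⟨h 2 + 2 * starError (1 / 4), fun n hn => ?_⟩
  have hn' : (0 : ℝ) < n := by exact_mod_cast hn
  filter_upwards [H.le_increment n hn (1 / 4) (by norm_num) (by norm_num),
    H.increment_le n hn (1 / 4) (by norm_num) (by norm_num), H.eventually_dilation_le,
    (tendsto_id.const_mul_atTop hn').eventually H.eventually_dilation_le] with x h₁ h₂ h₃ h₄
  simp only [id] at h₄
  rw [show (n : ℝ) * (1 + 1 / 4) * x = (1 + 1 / 4) * (n * x) by ring] at h₁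
  rw [abs_le]
  constructor <;> linarith

lemma exists_quasiAdditive (H : IsLogIncrement h G) :
    ∃ d, (∀ m n, 0 < m → 0 < n → |h (m * n) - (h m + h n)| ≤ d) ∧
      ∀ m n, 0 < m → m ≤ n → h m ≤ h n + d := by
  obtain ⟨D, hD⟩ := H.exists_abs_sub_increment_le
  obtain ⟨_, hD1⟩ := (hD 1 one_pos).exists
  have hD0 : 0 ≤ D := (abs_nonneg _).trans hD1
  refine ⟨3 * D, fun m n hm hn => ?_, fun m n hm hmn => ?_⟩
  · have hn' : (0 : ℝ) < n := by exact_mod_cast hn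
    obtain ⟨x, h₁, h₂, h₃⟩ := ((hD _ (Nat.mul_pos hm hn)).and
      (((tendsto_id.const_mul_atTop hn').eventually (hD m hm)).and (hD n hn))).exists
    simp only [id, Nat.cast_mul, mul_assoc] at h₁ h₂
    rw [abs_le] at *
    constructor <;> linarith
  · obtain ⟨x, h₁, h₂, hx⟩ :=
      ((hD m hm).and ((hD n (hm.trans_le hmn)).and (eventually_gt_atTop 0))).exists
    have hm' : (0 : ℝ) < m := by exact_mod_cast hm
    have hn' : (0 : ℝ) < n := by exact_mod_cast hm.trans_le hmn
    have : G (m * x) ≤ G (n * x) :=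
      H.mono (mem_Ioi.2 (by positivity)) (mem_Ioi.2 (by positivity)) (by gcongr)
    rw [abs_le] at h₁ h₂
    linarith

lemma mul_le_apply_natCeil (H : IsLogIncrement h G) {n : ℕ} (hn : 0 < n) {ε : ℝ} (hε : 0 < ε)
    (hε1 : ε < 1) (k : ℕ) :
    k * h n ≤ h ⌈(n : ℝ) ^ k * (1 + ε) ^ (k + 1)⌉₊ + (k + 1) * starError ε := by
  set N := ⌈(n : ℝ) ^ k * (1 + ε) ^ (k + 1)⌉₊
  have hn' : (0 : ℝ) < n := by exact_mod_cast hn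
  have hε' : 0 < 1 + ε := by linarith
  have hN : 0 < N := Nat.ceil_pos.2 (by positivity)
  have hstar : ∀ᶠ x in atTop, G (1 * x) ≤ G (n * (1 + ε) * x) + (starError ε - h n) := by
    filter_upwards [H.le_increment n hn ε hε hε1] with x hx
    rw [one_mul]
    linarith
  obtain ⟨x, h₁, h₂, hx⟩ := ((eventually_iterate one_pos (by positivity) hstar k).and
    (((tendsto_id.atTop_div_const hε').eventually (H.increment_le N hN ε hε hε1)).and
      (eventually_gt_atTop 0))).exists
  simp only [id, one_pow, one_mul, mul_div_cancel₀ x hε'.ne'] at h₁ h₂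
  have : G ((n * (1 + ε)) ^ k * x) ≤ G (N * (x / (1 + ε))) := by
    refine H.mono (mem_Ioi.2 (by positivity)) (mem_Ioi.2 (by positivity)) ?_
    calc ((n : ℝ) * (1 + ε)) ^ k * x = (n ^ k * (1 + ε) ^ (k + 1)) * (x / (1 + ε)) := by
          rw [mul_pow, pow_succ]; field_simp
      _ ≤ N * (x / (1 + ε)) := by gcongr; exact Nat.le_ceil _
  linarith

lemma apply_natFloor_le (H : IsLogIncrement h G) {n : ℕ} (hn : 0 < n) {ε : ℝ} (hε : 0 < ε)
    (hε1 : ε < 1) {k : ℕ} (hk : 1 ≤ (n : ℝ) ^ k / (1 + ε) ^ (k + 1)) :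
    h ⌊(n : ℝ) ^ k / (1 + ε) ^ (k + 1)⌋₊ ≤ k * (h n + starError ε) + starError ε := by
  set N := ⌊(n : ℝ) ^ k / (1 + ε) ^ (k + 1)⌋₊
  have hn' : (0 : ℝ) < n := by exact_mod_cast hn
  have hε' : 0 < 1 + ε := by linarith
  have hN : 0 < N := Nat.floor_pos.2 hk
  have hss : ∀ᶠ x in atTop, G (n * x) ≤ G ((1 + ε) * x) + (h n + starError ε) := by
    filter_upwards [H.increment_le n hn ε hε hε1] with x hx
    linarith
  obtain ⟨x, h₁, h₂, hx⟩ := ((eventually_iterate hn' hε' hss k).and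
    (((tendsto_id.const_mul_atTop (pow_pos hε' k)).eventually (H.le_increment N hN ε hε hε1)).and
      (eventually_gt_atTop 0))).exists
  simp only [id] at h₂
  have : G (N * (1 + ε) * ((1 + ε) ^ k * x)) ≤ G (n ^ k * x) := by
    refine H.mono (mem_Ioi.2 (by positivity)) (mem_Ioi.2 (by positivity)) ?_
    calc (N : ℝ) * (1 + ε) * ((1 + ε) ^ k * x) = (N * (1 + ε) ^ (k + 1)) * x := by ring
      _ ≤ n ^ k * x := by
        gcongr
        exact (le_div_iff₀ (by positivity)).1 (Nat.floor_le (by positivity))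
  linarith

lemma le_mul_log (H : IsLogIncrement h G) {c d : ℝ}
    (hcd : ∀ N : ℕ, 0 < N → |h N - c * log N| ≤ d) {n : ℕ} (hn : 0 < n) :
    h n ≤ c * log n := by
  suffices h n - c * log n ≤ 0 by linarith
  refine nonpos_of_forall_le_starError_add (a := |c|) fun ε hε hε1 => ?_
  suffices h n - c * log n - (starError ε + |c| * log (1 + ε)) ≤ 0 by linarith
  refine nonpos_of_eventually_nat_mul_le
    (C := starError ε + |c| * log (1 + ε) + |c| * log 2 + d) (Eventually.of_forall fun k => ?_)
  have hn' : (1 : ℝ) ≤ n := by exact_mod_cast hn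
  have hamp := H.mul_le_apply_natCeil hn hε hε1 k
  set y := (n : ℝ) ^ k * (1 + ε) ^ (k + 1)
  have hy : 1 ≤ y := one_le_mul_of_one_le_of_one_le (one_le_pow₀ hn') (one_le_pow₀ (by linarith))
  have hlogy : log y = k * log n + (k + 1) * log (1 + ε) := by
    rw [log_mul (by positivity) (by positivity), log_pow, log_pow]; push_cast; ring
  have hN := abs_le.1 (hcd _ (Nat.ceil_pos.2 (zero_lt_one.trans_le hy)))
  have hceil : |c * log ⌈y⌉₊ - c * log y| ≤ |c| * log 2 := by
    rw [← mul_sub, abs_mul]; gcongr; exact abs_log_natCeil_sub_log_le hy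
  have hlog1ε : 0 ≤ (k + 1) * log (1 + ε) := by
    have := log_nonneg (by linarith : (1 : ℝ) ≤ 1 + ε); positivity
  rw [hlogy] at hceil
  linarith [abs_le.1 hceil, mul_le_mul_of_nonneg_right (le_abs_self c) hlog1ε]

lemma mul_log_le (H : IsLogIncrement h G) {c d : ℝ}
    (hcd : ∀ N : ℕ, 0 < N → |h N - c * log N| ≤ d) {n : ℕ} (hn : 2 ≤ n) :
    c * log n ≤ h n := by
  suffices c * log n - h n ≤ 0 by linarith
  refine nonpos_of_forall_le_starError_add (a := |c|) fun ε hε hε1 => ?_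
  suffices c * log n - h n - (starError ε + |c| * log (1 + ε)) ≤ 0 by linarith
  have hn' : (2 : ℝ) ≤ n := by exact_mod_cast hn
  have hε' : 0 < 1 + ε := by linarith
  have hlarge : ∀ᶠ k : ℕ in atTop, 1 ≤ (n : ℝ) ^ k / (1 + ε) ^ (k + 1) := by
    filter_upwards [(tendsto_pow_atTop_atTop_of_one_lt
      ((one_lt_div hε').2 (by linarith : 1 + ε < n))).eventually_ge_atTop (1 + ε)] with k hk
    rw [div_pow, le_div_iff₀ (by positivity)] at hk
    rw [le_div_iff₀ (by positivity), one_mul, pow_succ]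
    linarith
  refine nonpos_of_eventually_nat_mul_le
    (C := starError ε + |c| * log (1 + ε) + |c| * log 2 + d) ?_
  filter_upwards [hlarge] with k hy
  have hamp := H.apply_natFloor_le (by omega) hε hε1 hy
  set y := (n : ℝ) ^ k / (1 + ε) ^ (k + 1)
  have hlogy : log y = k * log n - (k + 1) * log (1 + ε) := by
    rw [log_div (by positivity) (by positivity), log_pow, log_pow]; push_cast; ring
  have hN := abs_le.1 (hcd _ (Nat.floor_pos.2 hy))
  have hfloor : |c * log ⌊y⌋₊ - c * log y| ≤ |c| * log 2 := by
    rw [← mul_sub, abs_mul]; gcongr; exact abs_log_natFloor_sub_log_le hy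
  have hlog1ε : 0 ≤ (k + 1) * log (1 + ε) := by
    have := log_nonneg (by linarith : (1 : ℝ) ≤ 1 + ε); positivity
  rw [hlogy] at hfloor
  linarith [abs_le.1 hfloor, mul_le_mul_of_nonneg_right (le_abs_self c) hlog1ε]

theorem eq_mul_log (H : IsLogIncrement h G) : ∃ c, ∀ n : ℕ, 0 < n → h n = c * log n := by
  obtain ⟨d, hadd, hmono⟩ := H.exists_quasiAdditive
  obtain ⟨c, hcd⟩ := exists_abs_sub_mul_log_le_of_quasiAdditive hadd hmono
  refine ⟨c, fun n hn => ?_⟩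
  obtain rfl | hn2 := (Nat.one_le_iff_ne_zero.2 hn.ne').eq_or_lt
  · simp [H.map_one]
  · exact le_antisymm (H.le_mul_log hcd hn) (H.mul_log_le hcd hn2)

end IsLogIncrement

/-- Corollary (monotone case): if `f : ℕ → (0,∞)` is such that both `f` and `1/f` are
weakly super-multiplicative, and `f` has a strictly positive, monotone
(non-decreasing or non-increasing) normal order, then `f(n) = n ^ c` for some
constant `c` and all `n`. -/
theorem weakly_supermult_both_monotone_normal_order
    (f : ℕ → ℝ) (g : ℝ → ℝ)
    (hfpos : ∀ n, 0 < f n)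
    (hwsm : WeaklySuperMult f)
    (hwsm' : WeaklySuperMult (fun n => 1 / f n))
    (hgpos : ∀ x : ℝ, 0 < x → 0 < g x)
    (hgmono : (∀ x y : ℝ, 0 < x → x ≤ y → g x ≤ g y) ∨
              (∀ x y : ℝ, 0 < x → x ≤ y → g y ≤ g x))
    (hno : HasNormalOrder f g) :
    ∃ c : ℝ, ∀ n : ℕ, 0 < n → f n = (n : ℝ) ^ c := by
  have hsup : WeaklySuperMult fun n => exp (log (f n)) := by
    rwa [funext fun n => exp_log (hfpos n)]
  have hsub : WeaklySuperMult fun n => exp (-log (f n)) := by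
    rwa [funext fun n => show exp (-log (f n)) = 1 / f n by
      rw [exp_neg, exp_log (hfpos n), one_div]]
  have hlog := hno.log_abs_sub hfpos hgpos
  obtain ⟨c, hc⟩ : ∃ c : ℝ, ∀ n : ℕ, 0 < n → log (f n) = c * log n := by
    rcases hgmono with hinc | hdec
    · exact (isLogIncrement_of (G := fun x => log (g x))
        (fun x hx y _ hxy => log_le_log (hgpos x hx) (hinc x y hx hxy)) hlog hsup hsub).eq_mul_log
    · have hneg : ∀ η, 0 < η → upperDensity {k : ℕ | η ≤ |-log (f k) - -log (g k)|} = 0 :=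
        fun η hη => by simpa only [neg_sub_neg, abs_sub_comm] using hlog η hη
      obtain ⟨c, hc⟩ := (isLogIncrement_of (h := fun n => -log (f n)) (G := fun x => -log (g x))
        (fun x hx y hy hxy => neg_le_neg (log_le_log (hgpos y hy) (hdec x y hx hxy))) hneg
        hsub (by simpa only [neg_neg] using hsup)).eq_mul_log
      exact ⟨-c, fun n hn => by linarith [hc n hn]⟩
  refine ⟨c, fun n hn => ?_⟩
  rw [← exp_log (hfpos n), hc n hn, rpow_def_of_pos (by exact_mod_cast hn), mul_comm]
end

section
/- Let p be a prime and n a positive integer with gcd(n, p(p−1)) = 1 such that n has no divisor d ≠ 1 with d ≡ 1 (mod p). Then every finite group H of order np is the direct product of a group of order n and a group of order p; more precisely, H has a unique Sylow p-subgroup P, P is cyclic of order p and contained in the center of H, and there exists a normal subgroup K of H of order n with H isomorphic to K × P. -/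
/-!
Since `p ∤ n`, a Sylow `p`-subgroup `P` has order `p` and index `n`. The number of Sylow
`p`-subgroups divides `n` and is `≡ 1 (mod p)`, so it is `1` and `P` is normal. Conjugation then
maps `H` into `Aut P`, of order `p - 1`, which is coprime to `|H| = n p`; hence `P` is central.
Burnside's transfer theorem gives a normal complement `K` of `P`, and a central complement
makes the product a direct one.
-/

open Subgroup

theorem Subgroup.le_center_of_coprime_card_mulAut {G : Type*} [Group G] (N : Subgroup G)
    [N.Normal] (h : (Nat.card G).Coprime (Nat.card (MulAut N))) : N ≤ center G := by
  intro x hx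
  rw [mem_center_iff]
  intro g
  have hconj : MulAut.conjNormal (H := N) g = 1 := orderOf_eq_one_iff.mp <|
    Nat.eq_one_of_dvd_coprimes h ((orderOf_map_dvd _ _).trans (_root_.orderOf_dvd_natCard g))
      (_root_.orderOf_dvd_natCard _)
  have := MulAut.conjNormal_apply (H := N) g ⟨x, hx⟩
  rwa [hconj, MulAut.one_apply, eq_comm, mul_inv_eq_iff_eq_mul] at this

noncomputable def Subgroup.IsComplement'.prodMulEquivOfCommute {G : Type*} [Group G]
    {K L : Subgroup G} (h : K.IsComplement' L) (comm : ∀ k ∈ K, ∀ l ∈ L, Commute k l) :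
    K × L ≃* G :=
  MulEquiv.ofBijective (K.subtype.noncommCoprod L.subtype fun k l => comm k k.2 l l.2) h

theorem Sylow.card_eq_of_card_eq_mul {G : Type*} [Group G] [Finite G] {p n : ℕ} [Fact p.Prime]
    (hcard : Nat.card G = n * p) (hpn : ¬ p ∣ n) (P : Sylow p G) : Nat.card P = p := by
  have hn : n ≠ 0 := by
    rintro rfl
    exact Nat.card_pos.ne' (hcard.trans (zero_mul p))
  rw [P.card_eq_multiplicity, hcard, Nat.factorization_mul hn (Fact.out : p.Prime).ne_zero,
    Finsupp.add_apply, Nat.Prime.factorization_self Fact.out,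
    Nat.factorization_eq_zero_of_not_dvd hpn, zero_add, pow_one]

theorem Sylow.subsingleton_of_forall_dvd_index {G : Type*} [Group G] [Finite G] {p : ℕ}
    [Fact p.Prime] (P : Sylow p G) (h : ∀ d, d ∣ P.index → d ≠ 1 → ¬ d ≡ 1 [MOD p]) :
    Subsingleton (Sylow p G) :=
  (Nat.card_eq_one_iff_unique.mp (not_not.mp fun hne =>
    h _ P.card_dvd_index hne (card_sylow_modEq_one p G))).1

theorem group_order_np_direct_product_general
    (p n : ℕ) (hp : p.Prime)
    (hgcd : Nat.gcd n (p * (p - 1)) = 1)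
    (hdiv : ∀ d : ℕ, d ∣ n → d ≠ 1 → ¬ (d ≡ 1 [MOD p]))
    (H : Type*) [Group H] [Finite H] (hcard : Nat.card H = n * p) :
    ∃ P : Subgroup H,
      Nat.card P = p ∧ IsCyclic P ∧ P ≤ Subgroup.center H ∧
      (∀ Q : Sylow p H, (Q : Subgroup H) = P) ∧
      ∃ K : Subgroup H, K.Normal ∧ Nat.card K = n ∧ Nonempty (H ≃* K × P) := by
  have : Fact p.Prime := ⟨hp⟩
  obtain ⟨hnp, hnp₁⟩ := Nat.coprime_mul_iff_right.mp hgcd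
  obtain ⟨P⟩ : Nonempty (Sylow p H) := inferInstance
  have hcardP : Nat.card P = p :=
    P.card_eq_of_card_eq_mul hcard (hp.coprime_iff_not_dvd.mp hnp.symm)
  have hindex : (P : Subgroup H).index = n := by
    have := (P : Subgroup H).card_mul_index
    rw [hcardP, hcard, mul_comm] at this
    exact Nat.eq_of_mul_eq_mul_right hp.pos this
  have : Subsingleton (Sylow p H) := P.subsingleton_of_forall_dvd_index (hindex ▸ hdiv)
  have : IsCyclic P := isCyclic_of_prime_card hcardP
  have hcentral : (P : Subgroup H) ≤ center H := by
    have := P.normal_of_subsingleton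
    refine le_center_of_coprime_card_mulAut _ ?_
    rw [IsCyclic.card_mulAut, hcardP, Nat.totient_prime hp, hcard]
    exact hnp₁.mul_left ((Nat.coprime_self_sub_right hp.one_le).mpr (Nat.coprime_one_right p))
  have hNC : normalizer (P : Subgroup H) ≤ centralizer (P : Set H) :=
    (centralizer_eq_top_iff_subset.mpr hcentral).symm ▸ le_top
  have hK := MonoidHom.ker_transferSylow_isComplement' P hNC
  refine ⟨P, hcardP, inferInstance, hcentral, fun Q => congrArg _ (Subsingleton.elim Q P),
    _, inferInstance, ?_, ⟨(hK.prodMulEquivOfCommute ?_).symm⟩⟩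
  · have := hK.card_mul_card
    rw [hcardP, hcard] at this
    exact Nat.eq_of_mul_eq_mul_right hp.pos this
  · exact fun k _ l hl => mem_center_iff.mp (hcentral hl) k

/-- Let `p` be a prime and `n` a positive integer with `gcd(n, p(p-1)) = 1` such that
`n` has no divisor `d ≠ 1` with `d ≡ 1 (mod p)`. Then every finite group `H` of order
`n * p` has a unique Sylow `p`-subgroup `P`, which is cyclic of order `p` and central,
and `H` is the direct product of a normal subgroup `K` of order `n` with `P`. -/
theorem group_order_np_direct_product
    (p n : ℕ) (hp : p.Prime) (hn : 0 < n)
    (hgcd : Nat.gcd n (p * (p - 1)) = 1)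
    (hdiv : ∀ d : ℕ, d ∣ n → d ≠ 1 → ¬ (d ≡ 1 [MOD p]))
    (H : Type*) [Group H] [Finite H] (hcard : Nat.card H = n * p) :
    ∃ P : Subgroup H,
      Nat.card P = p ∧ IsCyclic P ∧ P ≤ Subgroup.center H ∧
      (∀ Q : Sylow p H, (Q : Subgroup H) = P) ∧
      ∃ K : Subgroup H, K.Normal ∧ Nat.card K = n ∧ Nonempty (H ≃* K × P) :=
  group_order_np_direct_product_general p n hp hgcd hdiv H hcard
end

section
/- Let G be a finitely generated group and for m ∈ ℕ let f(m) denote the number of normal subgroups of G of index m. Let n be a positive integer and p a prime with gcd(n, p(p−1)) = 1 such that n has no divisor d ≠ 1 with d ≡ 1 (mod p). Then f(np) = f(n)·f(p). -/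
/-- The number of normal subgroups of `G` of index `n`. -/
noncomputable def normalCount (G : Type*) [Group G] (n : ℕ) : ℕ :=
  Nat.card {N : Subgroup G // N.Normal ∧ N.index = n}

/-!
Intersecting gives a bijection `(A, B) ↦ A ⊓ B` from pairs of normal subgroups of index `n` and
`p` onto normal subgroups of index `n * p`. Injectivity is index arithmetic: if `N` has index
`m * q` with `m` and `q` coprime, at most one normal subgroup of index `m` contains `N`.
For surjectivity, `G ⧸ N` has order `n * p`. Its Sylow `p`-subgroup has order `p` and is normal,
since the number of Sylow `p`-subgroups divides `n` and is `1` modulo `p`. It is also central,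
since `Aut (ℤ/p)` has order `p - 1`, coprime to `n * p`, so Burnside's transfer theorem gives a
normal complement of order `n`. The preimages of these two subgroups are the required pair.
-/

namespace Subgroup

variable {G : Type*} [Group G]

theorem index_inf_of_coprime {H K : Subgroup G} (h : H.index.Coprime K.index) :
    (H ⊓ K).index = H.index * K.index := by
  rcases Nat.eq_zero_or_pos (H ⊓ K).index with h0 | hpos
  · rw [h0, eq_comm, mul_eq_zero]
    by_contra! hne
    exact index_inf_ne_zero hne.1 hne.2 h0
  · exact le_antisymm index_inf_le <| Nat.le_of_dvd hpos <|
      h.mul_dvd_of_dvd_of_dvd (index_dvd_of_le inf_le_left) (index_dvd_of_le inf_le_right)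

theorem eq_of_le_of_index_eq {H K : Subgroup G} (hle : H ≤ K) (hidx : H.index = K.index)
    (hK : K.index ≠ 0) : H = K := by
  refine le_antisymm hle (relIndex_eq_one.mp ?_)
  rw [← relIndex_mul_index hle] at hidx
  exact (mul_eq_right₀ hK).mp hidx

theorem eq_of_index_eq_of_index_eq_mul {N H K : Subgroup G} [H.Normal] {m q : ℕ}
    (hm : m ≠ 0) (hmq : m.Coprime q) (hH : H.index = m) (hK : K.index = m)
    (hNH : N ≤ H) (hNK : N ≤ K) (hN : N.index = m * q) : H = K := by
  have hdvd : H.relIndex K * m ∣ q * m := by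
    rw [← hK, ← inf_relIndex_right, relIndex_mul_index inf_le_right, hK, mul_comm q, ← hN]
    exact index_dvd_of_le (le_inf hNH hNK)
  have hKH : K ≤ H := relIndex_eq_one.mp <| Nat.eq_one_of_dvd_coprimes hmq
    (hH ▸ relIndex_dvd_index_of_normal H K)
    (Nat.dvd_of_mul_dvd_mul_right (Nat.pos_of_ne_zero hm) hdvd)
  exact (eq_of_le_of_index_eq hKH (hK.trans hH.symm) (hH ▸ hm)).symm

theorem normalizer_le_centralizer_of_coprime [Finite G] (H : Subgroup G)
    (h : (Nat.card G).Coprime (Nat.card (MulAut H))) :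
    normalizer (H : Set G) ≤ centralizer (H : Set G) := by
  have key := card_dvd_of_injective _ (QuotientGroup.kerLift_injective H.normalizerMonoidHom)
  rw [normalizerMonoidHom_ker, ← index, ← relIndex] at key
  exact relIndex_eq_one.mp <| Nat.eq_one_of_dvd_coprimes h
    ((relIndex_dvd_card ..).trans (card_subgroup_dvd_card _)) key

theorem exists_normal_le_index_eq_of_quotient {N : Subgroup G} [N.Normal] {m : ℕ}
    (h : ∃ X : Subgroup (G ⧸ N), X.Normal ∧ X.index = m) :
    ∃ A : Subgroup G, A.Normal ∧ N ≤ A ∧ A.index = m := by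
  obtain ⟨X, hX, hXi⟩ := h
  refine ⟨X.comap (QuotientGroup.mk' N), hX.comap _, ?_, ?_⟩
  · exact (QuotientGroup.ker_mk' N).symm.le.trans (MonoidHom.ker_le_comap _ X)
  · rw [index_comap_of_surjective _ (QuotientGroup.mk'_surjective N), hXi]

end Subgroup

namespace Sylow

variable {G : Type*} [Group G] [Finite G] {p n : ℕ} [Fact p.Prime]

theorem normal_of_forall_dvd_index (P : Sylow p G)
    (h : ∀ d : ℕ, d ∣ (P : Subgroup G).index → d ≠ 1 → ¬ d ≡ 1 [MOD p]) :
    (P : Subgroup G).Normal := by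
  have hone : Nat.card (Sylow p G) = 1 := by
    by_contra hne
    exact h _ P.card_dvd_index hne (card_sylow_modEq_one p G)
  have := (Nat.card_eq_one_iff_unique.mp hone).1
  exact P.normal_of_subsingleton

theorem card_eq_of_card_eq_mul_s7 (P : Sylow p G) (hG : Nat.card G = n * p) (hpn : ¬ p ∣ n) :
    Nat.card P = p := by
  have hp : p.Prime := Fact.out
  have hn : n ≠ 0 := by rintro rfl; exact hpn (dvd_zero p)
  rw [P.card_eq_multiplicity, hG, Nat.factorization_mul hn hp.ne_zero, Finsupp.add_apply,
    Nat.factorization_eq_zero_of_not_dvd hpn, hp.factorization_self, zero_add, pow_one]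

theorem index_eq_of_card_eq_mul (P : Sylow p G) (hG : Nat.card G = n * p) (hpn : ¬ p ∣ n) :
    (P : Subgroup G).index = n := by
  have h := (P : Subgroup G).card_mul_index
  rw [P.card_eq_of_card_eq_mul_s7 hG hpn, hG, mul_comm n] at h
  exact Nat.eq_of_mul_eq_mul_left (Fact.out : p.Prime).pos h

theorem exists_normal_index_eq_prime_of_coprime (P : Sylow p G) (hP : Nat.card P = p)
    (hG : (Nat.card G).Coprime (p - 1)) : ∃ K : Subgroup G, K.Normal ∧ K.index = p := by
  have hAut : Nat.card (MulAut P) = p - 1 := by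
    rw [(isCyclic_of_prime_card hP).card_mulAut, hP, Nat.totient_prime Fact.out]
  have hNC := Subgroup.normalizer_le_centralizer_of_coprime (P : Subgroup G) (hAut ▸ hG)
  exact ⟨(MonoidHom.transferSylow P hNC).ker, inferInstance,
    (MonoidHom.ker_transferSylow_isComplement' P hNC).symm.index_eq_card.trans hP⟩

end Sylow

theorem exists_normal_index_eq_of_card_eq_mul_prime {Q : Type*} [Group Q] [Finite Q]
    {n p : ℕ} (hp : p.Prime) (hQ : Nat.card Q = n * p) (hpn : ¬ p ∣ n)
    (hcop : (n * p).Coprime (p - 1))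
    (hdiv : ∀ d : ℕ, d ∣ n → d ≠ 1 → ¬ d ≡ 1 [MOD p]) :
    (∃ A : Subgroup Q, A.Normal ∧ A.index = n) ∧ ∃ B : Subgroup Q, B.Normal ∧ B.index = p := by
  have := Fact.mk hp
  obtain ⟨P⟩ : Nonempty (Sylow p Q) := inferInstance
  have hPi := P.index_eq_of_card_eq_mul hQ hpn
  exact ⟨⟨P, P.normal_of_forall_dvd_index (hPi ▸ hdiv), hPi⟩,
    P.exists_normal_index_eq_prime_of_coprime (P.card_eq_of_card_eq_mul_s7 hQ hpn) (hQ ▸ hcop)⟩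

namespace Subgroup

variable {G : Type*} [Group G] {m k : ℕ}

def normalInf (h : m.Coprime k)
    (AB : {A : Subgroup G // A.Normal ∧ A.index = m} ×
      {B : Subgroup G // B.Normal ∧ B.index = k}) :
    {N : Subgroup G // N.Normal ∧ N.index = m * k} :=
  ⟨AB.1.1 ⊓ AB.2.1, by have := AB.1.2.1; have := AB.2.2.1; infer_instance, by
    rw [index_inf_of_coprime (by rwa [AB.1.2.2, AB.2.2.2]), AB.1.2.2, AB.2.2.2]⟩

theorem normalInf_injective (hm : m ≠ 0) (hk : k ≠ 0) (h : m.Coprime k) :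
    Function.Injective (normalInf (G := G) h) := by
  rintro ⟨⟨A, hA, hAi⟩, ⟨B, hB, hBi⟩⟩ ⟨⟨A', _, hAi'⟩, ⟨B', _, hBi'⟩⟩ heq
  have hN : (A ⊓ B).index = m * k := (normalInf h ⟨⟨A, hA, hAi⟩, ⟨B, hB, hBi⟩⟩).2.2
  replace heq : A ⊓ B = A' ⊓ B' := congrArg Subtype.val heq
  have hAA' : A = A' := eq_of_index_eq_of_index_eq_mul hm h hAi hAi' inf_le_left
    (heq ▸ inf_le_left) hN
  have hBB' : B = B' := eq_of_index_eq_of_index_eq_mul hk h.symm hBi hBi' inf_le_right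
    (heq ▸ inf_le_right) (hN.trans (mul_comm m k))
  subst hAA' hBB'
  rfl

theorem normalInf_surjective {n p : ℕ} (hn : n ≠ 0) (hp : p.Prime) (hco : n.Coprime p)
    (hcop : (n * p).Coprime (p - 1)) (hdiv : ∀ d : ℕ, d ∣ n → d ≠ 1 → ¬ d ≡ 1 [MOD p]) :
    Function.Surjective (normalInf (G := G) hco) := by
  rintro ⟨N, hN, hNi⟩
  have hQ : Nat.card (G ⧸ N) = n * p := by rw [← index_eq_card, hNi]
  have : Finite (G ⧸ N) := Nat.finite_of_card_ne_zero (hQ ▸ mul_ne_zero hn hp.ne_zero)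
  obtain ⟨hA, hB⟩ := exists_normal_index_eq_of_card_eq_mul_prime hp hQ
    ((Nat.Prime.coprime_iff_not_dvd hp).mp hco.symm) hcop hdiv
  obtain ⟨A, hA, hNA, hAi⟩ := exists_normal_le_index_eq_of_quotient hA
  obtain ⟨B, hB, hNB, hBi⟩ := exists_normal_le_index_eq_of_quotient hB
  let AB : {A : Subgroup G // A.Normal ∧ A.index = n} ×
      {B : Subgroup G // B.Normal ∧ B.index = p} := ⟨⟨A, hA, hAi⟩, ⟨B, hB, hBi⟩⟩
  have hABi : (A ⊓ B).index = n * p := (normalInf hco AB).2.2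
  exact ⟨AB, Subtype.ext (eq_of_le_of_index_eq (le_inf hNA hNB) (hNi.trans hABi.symm)
    (hABi ▸ mul_ne_zero hn hp.ne_zero)).symm⟩

end Subgroup

theorem normalCount_mul_prime_general
    (G : Type*) [Group G]
    (n p : ℕ) (hn : 0 < n) (hp : p.Prime)
    (hgcd : Nat.gcd n (p * (p - 1)) = 1)
    (hdiv : ∀ d : ℕ, d ∣ n → d ≠ 1 → ¬ (d ≡ 1 [MOD p])) :
    normalCount G (n * p) = normalCount G n * normalCount G p := by
  have hco : n.Coprime p := Nat.Coprime.coprime_mul_right_right hgcd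
  have hcop : (n * p).Coprime (p - 1) := (Nat.Coprime.coprime_mul_left_right hgcd).mul_left
    ((Nat.coprime_self_sub_right hp.one_lt.le).mpr (Nat.coprime_one_right p))
  rw [normalCount, normalCount, normalCount, ← Nat.card_prod]
  exact (Nat.card_congr (Equiv.ofBijective _
    ⟨Subgroup.normalInf_injective hn.ne' hp.ne_zero hco,
      Subgroup.normalInf_surjective hn.ne' hp hco hcop hdiv⟩)).symm

/-- Let `G` be a finitely generated group, `n` a positive integer and `p` a prime with
`gcd(n, p(p-1)) = 1` such that `n` has no divisor `d ≠ 1` with `d ≡ 1 (mod p)`. Then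
the number of normal subgroups of index `n * p` equals the product of the numbers of
normal subgroups of index `n` and of index `p`. -/
theorem normalCount_mul_prime
    (G : Type*) [Group G] (hFG : Group.FG G)
    (n p : ℕ) (hn : 0 < n) (hp : p.Prime)
    (hgcd : Nat.gcd n (p * (p - 1)) = 1)
    (hdiv : ∀ d : ℕ, d ∣ n → d ≠ 1 → ¬ (d ≡ 1 [MOD p])) :
    normalCount G (n * p) = normalCount G n * normalCount G p :=
  normalCount_mul_prime_general G n p hn hp hgcd hdiv
end

section
/- There is an absolute constant C such that for all x ≥ 16 and all integers q with x^{1/4} ≤ q ≤ √x, the number of integers n ≤ x with P⁺(n) > √x, q | n, and q | P⁺(n) − 1 is at most C·x·(log x)/q². -/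
/-!
If `p = P⁺(n)` and `q ∣ p - 1`, then `p = 1 + j q` with `j ≥ 1`, and `p` is coprime to `q`, so
`n` is a multiple of `(1 + j q) q ≥ j q²`. Summing the number `≤ x / (j q²)` of such multiples
of size at most `x` over `j ≤ x` gives `(x / q²) H_⌊x⌋ ≤ x (1 + log x) / q²`.
-/

open Finset

/-- `P⁺(n)`, the largest prime divisor of `n ≥ 2`, with `P⁺(1) = 1` (and `P⁺(0) = 0`). -/
def Pplus (n : ℕ) : ℕ :=
  if n ≤ 1 then n else n.primeFactors.sup id

lemma Pplus_mem_primeFactors {n : ℕ} (h : 1 < Pplus n) : Pplus n ∈ n.primeFactors := by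
  by_cases hn : n ≤ 1
  · simp only [Pplus, if_pos hn] at h
    omega
  · obtain ⟨p, hp, hsup⟩ :=
      exists_mem_eq_sup n.primeFactors (Nat.nonempty_primeFactors.mpr (by omega)) id
    simpa only [Pplus, if_neg hn, hsup, id] using hp

lemma exists_mem_Icc_one_add_mul_mul_dvd {N n p q : ℕ} (hq : 0 < q) (hn : 0 < n) (hnN : n ≤ N)
    (hp : p.Prime) (hpn : p ∣ n) (hqn : q ∣ n) (hqp : q ∣ p - 1) :
    ∃ j ∈ Icc 1 N, (1 + j * q) * q ∣ n := by
  obtain ⟨j, hj⟩ := hqp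
  have hpj : p = 1 + j * q := by
    rw [mul_comm] at hj
    have := hp.two_le
    omega
  have hj1 : 1 ≤ j := Nat.one_le_iff_ne_zero.mpr fun h => hp.ne_one (by simpa [h] using hpj)
  have hjN : j ≤ N := calc
    j ≤ j * q := Nat.le_mul_of_pos_right j hq
    _ ≤ p := by omega
    _ ≤ n := Nat.le_of_dvd hn hpn
    _ ≤ N := hnN
  have hpq : p.Coprime q := by
    rw [hpj, Nat.coprime_add_mul_right_left]
    exact Nat.coprime_one_left q
  exact ⟨j, mem_Icc.mpr ⟨hj1, hjN⟩, hpj ▸ hpq.mul_dvd_of_dvd_of_dvd hpn hqn⟩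

lemma card_filter_dvd_exists_prime_one_mod_le (N : ℕ) {q : ℕ} (hq : 0 < q) :
    #{n ∈ Ioc 0 N | q ∣ n ∧ ∃ p ∈ n.primeFactors, q ∣ p - 1} ≤
      ∑ j ∈ Icc 1 N, N / ((1 + j * q) * q) := by
  calc _ ≤ #((Icc 1 N).biUnion fun j => {n ∈ Ioc 0 N | (1 + j * q) * q ∣ n}) := by
        refine card_le_card fun n hn => ?_
        obtain ⟨hnN, hqn, p, hp, hqp⟩ := mem_filter.mp hn
        obtain ⟨hp, hpn, -⟩ := Nat.mem_primeFactors.mp hp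
        obtain ⟨j, hj, hdvd⟩ := exists_mem_Icc_one_add_mul_mul_dvd hq
          (mem_Ioc.mp hnN).1 (mem_Ioc.mp hnN).2 hp hpn hqn hqp
        exact mem_biUnion.mpr ⟨j, hj, mem_filter.mpr ⟨hnN, hdvd⟩⟩
    _ ≤ ∑ j ∈ Icc 1 N, #{n ∈ Ioc 0 N | (1 + j * q) * q ∣ n} := card_biUnion_le
    _ = ∑ j ∈ Icc 1 N, N / ((1 + j * q) * q) := by simp only [Nat.Ioc_filter_dvd_card_eq_div]

lemma sum_div_one_add_mul_mul_le (N : ℕ) {q : ℕ} (hq : 0 < q) :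
    ((∑ j ∈ Icc 1 N, N / ((1 + j * q) * q) : ℕ) : ℝ) ≤
      N * (1 + Real.log N) / (q : ℝ) ^ 2 := by
  have hq1 : (1 : ℝ) ≤ q := by exact_mod_cast hq
  calc ((∑ j ∈ Icc 1 N, N / ((1 + j * q) * q) : ℕ) : ℝ)
      ≤ ∑ j ∈ Icc 1 N, (N : ℝ) / (q : ℝ) ^ 2 * (j : ℝ)⁻¹ := by
        push_cast
        refine sum_le_sum fun j hj => Nat.cast_div_le.trans ?_
        have hj1 : (1 : ℝ) ≤ j := by exact_mod_cast (mem_Icc.mp hj).1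
        rw [show (N : ℝ) / (q : ℝ) ^ 2 * (j : ℝ)⁻¹ = N / (j * q * q) by ring]
        push_cast
        gcongr
        linarith
    _ = N / (q : ℝ) ^ 2 * harmonic N := by
        rw [← mul_sum, harmonic_eq_sum_Icc]
        push_cast
        rfl
    _ ≤ N / (q : ℝ) ^ 2 * (1 + Real.log N) := by gcongr; exact harmonic_le_one_add_log N
    _ = N * (1 + Real.log N) / (q : ℝ) ^ 2 := by ring

/-- There is an absolute constant `C` such that for all `x ≥ 16` and all integers `q`
with `x^(1/4) ≤ q ≤ √x`, the number of integers `n ≤ x` with `P⁺(n) > √x`, `q ∣ n` and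
`q ∣ P⁺(n) - 1` is at most `C x log x / q²`. -/
theorem count_large_modulus_bound :
    ∃ C : ℝ, ∀ x : ℝ, 16 ≤ x → ∀ q : ℕ,
      x ^ ((1 : ℝ) / 4) ≤ (q : ℝ) → (q : ℝ) ≤ Real.sqrt x →
      (({n : ℕ | 0 < n ∧ (n : ℝ) ≤ x ∧ Real.sqrt x < (Pplus n : ℝ) ∧
          q ∣ n ∧ q ∣ (Pplus n - 1)} : Set ℕ).ncard : ℝ) ≤
        C * x * Real.log x / (q : ℝ) ^ 2 := by
  refine ⟨2, fun x hx q hq_low _ => ?_⟩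
  have hx0 : 0 < x := by linarith
  have hq : 0 < q := by exact_mod_cast (Real.rpow_pos_of_pos hx0 _).trans_le hq_low
  set N := ⌊x⌋₊
  have hNx : (N : ℝ) ≤ x := Nat.floor_le hx0.le
  have hN : 0 < N := Nat.floor_pos.mpr (by linarith)
  have hlog : 1 ≤ Real.log x := by
    rw [Real.le_log_iff_exp_le hx0]
    linarith [Real.exp_one_lt_d9]
  have hsub : {n : ℕ | 0 < n ∧ (n : ℝ) ≤ x ∧ Real.sqrt x < (Pplus n : ℝ) ∧
      q ∣ n ∧ q ∣ (Pplus n - 1)} ⊆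
      ↑{n ∈ Ioc 0 N | q ∣ n ∧ ∃ p ∈ n.primeFactors, q ∣ p - 1} := by
    rintro n ⟨hn, hnx, hp, hqn, hqp⟩
    have hp1 : 1 < Pplus n := by
      have : 1 ≤ Real.sqrt x := Real.one_le_sqrt.mpr (by linarith)
      exact_mod_cast this.trans_lt hp
    exact mem_filter.mpr
      ⟨mem_Ioc.mpr ⟨hn, Nat.le_floor hnx⟩, hqn, Pplus n, Pplus_mem_primeFactors hp1, hqp⟩
  calc _ ≤ (#{n ∈ Ioc 0 N | q ∣ n ∧ ∃ p ∈ n.primeFactors, q ∣ p - 1} : ℝ) := by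
        exact_mod_cast (Set.ncard_le_ncard hsub (finite_toSet _)).trans_eq (Set.ncard_coe_finset _)
    _ ≤ ((∑ j ∈ Icc 1 N, N / ((1 + j * q) * q) : ℕ) : ℝ) := by
        exact_mod_cast card_filter_dvd_exists_prime_one_mod_le N hq
    _ ≤ N * (1 + Real.log N) / (q : ℝ) ^ 2 := sum_div_one_add_mul_mul_le N hq
    _ ≤ x * (1 + Real.log x) / (q : ℝ) ^ 2 := by gcongr
    _ ≤ 2 * x * Real.log x / (q : ℝ) ^ 2 :=
        div_le_div_of_nonneg_right (by nlinarith) (by positivity)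
end

section
/- Let f : ℕ → [0,∞) be weakly super-multiplicative with normal order g, where g : (0,∞) → (0,∞) is strictly positive and non-decreasing. Then for every n ∈ ℕ and every ε > 0 there exists x₀ > 0 such that for all x > x₀ one has g(n(1+ε)x) ≥ (1 − 3ε)·f(n)·g(x). -/
open Filter

lemma eventually_ncard_inter_Iic_lt_of_upperDensity_eq_zero {S : Set ℕ}
    (hS : upperDensity S = 0) {c : ℝ} (hc : 0 < c) :
    ∀ᶠ N : ℕ in atTop, ((S ∩ Set.Iic N).ncard : ℝ) < c * N := by
  have hbdd : IsBoundedUnder (· ≤ ·) atTop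
      (fun N : ℕ => (({n | n ∈ S ∧ n ≤ N} : Set ℕ).ncard : ℝ) / N) := by
    refine isBoundedUnder_of_eventually_le (a := 2) ?_
    filter_upwards [eventually_ge_atTop 1] with N hN
    have hcard : (S ∩ Set.Iic N).ncard ≤ N + 1 := by
      simpa using Set.ncard_le_ncard Set.inter_subset_right (Set.finite_Iic N)
    have hN : (1 : ℝ) ≤ N := by exact_mod_cast hN
    have hcard : ((S ∩ Set.Iic N).ncard : ℝ) ≤ N + 1 := by exact_mod_cast hcard
    rw [div_le_iff₀ (by positivity)]
    exact hcard.trans (by linarith)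
  have hlim : limsup (fun N : ℕ => (({n | n ∈ S ∧ n ≤ N} : Set ℕ).ncard : ℝ) / N) atTop < c := by
    rwa [← upperDensity, hS]
  filter_upwards [eventually_lt_of_limsup_lt hlim hbdd, eventually_gt_atTop 0] with N hlt hN
  rwa [div_lt_iff₀ (by exact_mod_cast hN)] at hlt

lemma exists_mem_not_mem_and_mul_not_mem_of_ncard_lt {A B : Set ℕ} {n N : ℕ} (hn : 0 < n)
    (hA : A ⊆ Set.Iic N)
    (hcard : (B ∩ Set.Iic N).ncard + (B ∩ Set.Iic (n * N)).ncard < A.ncard) :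
    ∃ m ∈ A, m ∉ B ∧ n * m ∉ B := by
  by_contra! hbad
  have hAfin : A.Finite := (Set.finite_Iic N).subset hA
  have hinter : (A ∩ B).ncard ≤ (B ∩ Set.Iic N).ncard :=
    Set.ncard_le_ncard (fun m hm => ⟨hm.2, hA hm.1⟩) ((Set.finite_Iic N).inter_of_right B)
  have hdiff : (A \ B).ncard ≤ (B ∩ Set.Iic (n * N)).ncard := by
    refine Set.ncard_le_ncard_of_injOn (n * ·) (fun m hm => ⟨hbad m hm.1 hm.2, ?_⟩)
      (fun a _ b _ hab => Nat.eq_of_mul_eq_mul_left hn hab) ((Set.finite_Iic _).inter_of_right B)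
    exact Nat.mul_le_mul_left n (hA hm.1)
  have hsplit := Set.ncard_inter_add_ncard_sdiff_eq_ncard A B hAfin
  omega

theorem WeaklySuperMult.exists_good_multiplier {f : ℕ → ℝ} {g : ℝ → ℝ}
    (hwsm : WeaklySuperMult f) (hno : HasNormalOrder f g) {n : ℕ} (hn : 0 < n)
    {ε : ℝ} (hε : 0 < ε) :
    ∃ x₀ : ℝ, 0 < x₀ ∧ ∀ x : ℝ, x₀ < x → ∃ m : ℕ, (x ≤ m ∧ (m : ℝ) ≤ (1 + ε) * x) ∧
      (1 - ε) * f n * f m ≤ f (n * m) ∧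
      |f m - g m| < ε * g m ∧ |f (n * m) - g ↑(n * m)| < ε * g ↑(n * m) := by
  obtain ⟨y₀, hy₀, δ, hδ, hA⟩ := hwsm n hn ε hε
  set c := δ / ((1 + ε) * (n + 1))
  have hcδ : c * ((1 + ε) * (n + 1)) = δ := div_mul_cancel₀ δ (by positivity)
  obtain ⟨N₀, hN₀⟩ := (eventually_ncard_inter_Iic_lt_of_upperDensity_eq_zero (hno ε hε)
    (by positivity : 0 < c)).exists_forall_of_atTop
  refine ⟨max y₀ N₀, lt_max_of_lt_left hy₀, fun x hx => ?_⟩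
  have hx₀ : 0 < x := (hy₀.trans_le (le_max_left _ _)).trans hx
  set N := ⌊(1 + ε) * x⌋₊
  have hNx : (N : ℝ) ≤ (1 + ε) * x := Nat.floor_le (by positivity)
  have hN₀N : N₀ ≤ N := Nat.le_floor (by nlinarith [le_max_right y₀ N₀])
  have hbad₁ := hN₀ N hN₀N
  have hbad₂ := hN₀ (n * N) (hN₀N.trans (Nat.le_mul_of_pos_left N hn))
  set A : Set ℕ := {m : ℕ | (x ≤ (m : ℝ) ∧ (m : ℝ) ≤ (1 + ε) * x) ∧
    (1 - ε) * f n * f m ≤ f (n * m)}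
  set B : Set ℕ := {k : ℕ | ε * g k ≤ |f k - g k|}
  have hcount : ((B ∩ Set.Iic N).ncard : ℝ) + (B ∩ Set.Iic (n * N)).ncard < A.ncard := calc
    _ < c * N + c * ↑(n * N) := add_lt_add hbad₁ hbad₂
    _ = c * ((n + 1) * N) := by push_cast; ring
    _ ≤ c * ((n + 1) * ((1 + ε) * x)) := by gcongr
    _ = δ * x := by rw [← hcδ]; ring
    _ ≤ _ := hA x (lt_of_le_of_lt (le_max_left _ _) hx)
  obtain ⟨m, ⟨hm, hmul⟩, hmB, hnmB⟩ := exists_mem_not_mem_and_mul_not_mem_of_ncard_lt hn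
    (A := A) (B := B) (fun m hm => Nat.le_floor hm.1.2) (by exact_mod_cast hcount)
  exact ⟨m, hm, hmul, not_le.mp hmB, not_le.mp hnmB⟩

/-- Growth condition for monotone `g`: if `f : ℕ → [0,∞)` is weakly
super-multiplicative with strictly positive non-decreasing normal order `g`, then for
every `n` and `ε > 0` there is `x₀ > 0` such that for all `x > x₀` we have
`g(n(1+ε)x) ≥ (1-3ε) f(n) g(x)`. -/
theorem growth_condition_monotone
    (f : ℕ → ℝ) (g : ℝ → ℝ)
    (hf0 : ∀ n, 0 ≤ f n)
    (hwsm : WeaklySuperMult f)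
    (hgpos : ∀ x : ℝ, 0 < x → 0 < g x)
    (hgmono : ∀ x y : ℝ, 0 < x → x ≤ y → g x ≤ g y)
    (hno : HasNormalOrder f g) :
    ∀ n : ℕ, 0 < n → ∀ ε : ℝ, 0 < ε → ∃ x₀ : ℝ, 0 < x₀ ∧ ∀ x : ℝ, x₀ < x →
      (1 - 3 * ε) * f n * g x ≤ g ((n : ℝ) * (1 + ε) * x) := by
  intro n hn ε hε
  obtain ⟨x₀, hx₀, hgood⟩ := hwsm.exists_good_multiplier hno hn hε
  refine ⟨x₀, hx₀, fun x hx => ?_⟩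
  obtain ⟨m, ⟨hxm, hmx⟩, hmul, hm, hnm⟩ := hgood x hx
  have hx : 0 < x := hx₀.trans hx
  have hfg : 0 ≤ f n * g x := mul_nonneg (hf0 n) (hgpos x hx).le
  rcases le_or_gt (1 - 3 * ε) 0 with hε3 | hε3
  · have := hgpos _ (by positivity : (0 : ℝ) < n * (1 + ε) * x)
    nlinarith [mul_nonpos_of_nonpos_of_nonneg hε3 hfg]
  have hm0 : (0 : ℝ) < m := hx.trans_le hxm
  have hcoef : 0 ≤ (1 - ε) * f n := mul_nonneg (by linarith) (hf0 n)
  have hnm_le : ((n * m : ℕ) : ℝ) ≤ n * (1 + ε) * x := by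
    rw [Nat.cast_mul, mul_assoc]
    exact mul_le_mul_of_nonneg_left hmx n.cast_nonneg
  rw [abs_lt] at hm hnm
  refine le_of_mul_le_mul_left ?_ (by positivity : 0 < 1 + ε)
  calc (1 + ε) * ((1 - 3 * ε) * f n * g x)
      ≤ (1 - ε) * f n * ((1 - ε) * g x) := by nlinarith [mul_nonneg (sq_nonneg ε) hfg]
    _ ≤ (1 - ε) * f n * ((1 - ε) * g m) :=
        mul_le_mul_of_nonneg_left (mul_le_mul_of_nonneg_left (hgmono x m hx hxm) (by linarith))
          hcoef
    _ ≤ (1 - ε) * f n * f m := mul_le_mul_of_nonneg_left (by linarith) hcoef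
    _ ≤ f (n * m) := hmul
    _ ≤ (1 + ε) * g ↑(n * m) := by linarith
    _ ≤ (1 + ε) * g (n * (1 + ε) * x) :=
        mul_le_mul_of_nonneg_left (hgmono _ _ (by push_cast; positivity) hnm_le) (by positivity)
end
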